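/- arXiv:quant-ph/9705037 — 7 statements merged into one kernel-verified Lean document; each statement's English description precedes it below -/
import Mathlib

section
/- Let n ≥ 1 and d ≥ 1 be integers and K > 0 a real number, and let A, B : {0,1,…,n} → ℝ satisfy the normalized quantum enumerator conditions: A_0 = B_0 = 1; A_i ≥ 0 and B_i ≥ 0 for all 0 ≤ i ≤ n; A_i = B_i = 0 for 1 ≤ i ≤ d−1; and A_t = (1/(2^n K)) · Σ_{i=0}^{n} B_i · P_t(i,n) for every 0 ≤ t ≤ n. Let f_0, f_1, …, f_n be real numbers and define f(x) = Σ_{t=0}^{n} f_t · P_t(x,n) for x = 0,1,…,n. If f_0 > 0, f_i ≥ 0 for all 1 ≤ i ≤ n, f(0) > 0, and f(i) ≤ 0 for all d ≤ i ≤ n, then 2^n K ≤ f(0)/f_0. -/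
/-!
Delsarte's linear programming argument. Expanding `f` in the Krawtchouk basis and using the
MacWilliams-type identity `2^n K A_t = ∑ᵢ Bᵢ P_t(i)` gives `2^n K ∑ₜ fₜ Aₜ = ∑ᵢ Bᵢ f(i)`.
The left side is at least `2^n K f₀` since every term is nonnegative and `A₀ = 1`; the right
side is at most `f(0)` since `B₀ = 1` and every other term vanishes or has `Bᵢ ≥ 0 ≥ f(i)`.
-/

open Finset

/-- The quaternary Krawtchouk polynomial
`P_t(x,n) = ∑_{j=0}^{t} (−1)^j 3^{t−j} C(x,j) C(n−x, t−j)`. -/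
noncomputable def kraw (n t x : ℕ) : ℝ :=
  ∑ j ∈ Finset.range (t + 1),
    (-1 : ℝ) ^ j * 3 ^ (t - j) * (Nat.choose x j) * (Nat.choose (n - x) (t - j))

theorem mul_sum_mul_eq_sum_mul_of_transform {ι R : Type*} [CommSemiring R]
    (s : Finset ι) (P : ι → ι → R) (c : R) (f A B F : ι → R)
    (hA : ∀ t ∈ s, c * A t = ∑ i ∈ s, B i * P t i)
    (hF : ∀ x ∈ s, F x = ∑ t ∈ s, f t * P t x) :
    c * ∑ t ∈ s, f t * A t = ∑ i ∈ s, B i * F i :=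
  calc c * ∑ t ∈ s, f t * A t = ∑ t ∈ s, ∑ i ∈ s, f t * (B i * P t i) := by
        rw [mul_sum]
        refine sum_congr rfl fun t ht => ?_
        rw [mul_left_comm, hA t ht, mul_sum]
    _ = ∑ i ∈ s, ∑ t ∈ s, B i * (f t * P t i) := by
        rw [sum_comm]
        exact sum_congr rfl fun _ _ => sum_congr rfl fun _ _ => mul_left_comm _ _ _
    _ = ∑ i ∈ s, B i * F i :=
        sum_congr rfl fun i hi => by rw [hF i hi, mul_sum]

theorem mul_le_sum_range_of_nonneg (n : ℕ) (f A : ℕ → ℝ)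
    (hf : ∀ t ≤ n, 0 ≤ f t) (hA : ∀ t ≤ n, 0 ≤ A t) :
    f 0 * A 0 ≤ ∑ t ∈ range (n + 1), f t * A t :=
  single_le_sum (f := fun t => f t * A t)
    (fun t ht => mul_nonneg (hf t (mem_range_succ_iff.mp ht))
      (hA t (mem_range_succ_iff.mp ht)))
    (mem_range.mpr n.succ_pos)

theorem sum_range_le_mul_of_nonpos (n : ℕ) (B F : ℕ → ℝ)
    (h : ∀ i, 1 ≤ i → i ≤ n → B i * F i ≤ 0) :
    ∑ i ∈ range (n + 1), B i * F i ≤ B 0 * F 0 := by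
  rw [sum_range_succ']
  have htail : ∑ i ∈ range n, B (i + 1) * F (i + 1) ≤ 0 :=
    sum_nonpos fun i hi => h (i + 1) (by omega) (by simpa using hi)
  linarith

theorem stmt1_general (n d : ℕ) (K : ℝ) (hK : 0 < K) (A B : ℕ → ℝ)
    (hA0 : A 0 = 1) (hB0 : B 0 = 1)
    (hAnonneg : ∀ i ≤ n, 0 ≤ A i) (hBnonneg : ∀ i ≤ n, 0 ≤ B i)
    (hBzero : ∀ i, 1 ≤ i → i ≤ d - 1 → B i = 0)
    (hAB : ∀ t ≤ n, A t = (1 / (2 ^ n * K)) * ∑ i ∈ Finset.range (n + 1), B i * kraw n t i)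
    (f F : ℕ → ℝ)
    (hF : ∀ x ≤ n, F x = ∑ t ∈ Finset.range (n + 1), f t * kraw n t x)
    (hf0 : 0 < f 0) (hfnonneg : ∀ i, 1 ≤ i → i ≤ n → 0 ≤ f i)
    (hFnonpos : ∀ i, d ≤ i → i ≤ n → F i ≤ 0) :
    2 ^ n * K ≤ F 0 / f 0 := by
  have hc : 0 < (2 : ℝ) ^ n * K := by positivity
  have hdual : 2 ^ n * K * ∑ t ∈ range (n + 1), f t * A t = ∑ i ∈ range (n + 1), B i * F i :=
    mul_sum_mul_eq_sum_mul_of_transform _ (kraw n) _ f A B F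
      (fun t ht => by rw [hAB t (mem_range_succ_iff.mp ht)]; field_simp)
      (fun x hx => hF x (mem_range_succ_iff.mp hx))
  have hlower : f 0 ≤ ∑ t ∈ range (n + 1), f t * A t := by
    simpa [hA0] using mul_le_sum_range_of_nonneg n f A
      (fun t ht => t.eq_zero_or_pos.elim (fun h => h ▸ hf0.le) (hfnonneg t · ht)) hAnonneg
  have hupper : ∑ i ∈ range (n + 1), B i * F i ≤ F 0 := by
    simpa [hB0] using sum_range_le_mul_of_nonpos n B F fun i hi hin =>
      if hid : i ≤ d - 1 then by simp [hBzero i hi hid]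
      else mul_nonpos_of_nonneg_of_nonpos (hBnonneg i hin) (hFnonpos i (by omega) hin)
  rw [le_div_iff₀ hf0]
  calc 2 ^ n * K * f 0 ≤ 2 ^ n * K * ∑ t ∈ range (n + 1), f t * A t :=
        mul_le_mul_of_nonneg_left hlower hc.le
    _ = ∑ i ∈ range (n + 1), B i * F i := hdual
    _ ≤ F 0 := hupper

/-- Linear programming bound: under the normalized quantum enumerator conditions, if
`f_0 > 0`, `f_i ≥ 0` for `1 ≤ i ≤ n`, `f(0) > 0` and `f(i) ≤ 0` for `d ≤ i ≤ n`,
then `2^n K ≤ f(0)/f_0`. -/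
theorem stmt1 (n d : ℕ) (hn : 1 ≤ n) (hd : 1 ≤ d) (K : ℝ) (hK : 0 < K) (A B : ℕ → ℝ)
    (hA0 : A 0 = 1) (hB0 : B 0 = 1)
    (hAnonneg : ∀ i ≤ n, 0 ≤ A i) (hBnonneg : ∀ i ≤ n, 0 ≤ B i)
    (hAzero : ∀ i, 1 ≤ i → i ≤ d - 1 → A i = 0)
    (hBzero : ∀ i, 1 ≤ i → i ≤ d - 1 → B i = 0)
    (hAB : ∀ t ≤ n, A t = (1 / (2 ^ n * K)) * ∑ i ∈ Finset.range (n + 1), B i * kraw n t i)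
    (f F : ℕ → ℝ)
    (hF : ∀ x ≤ n, F x = ∑ t ∈ Finset.range (n + 1), f t * kraw n t x)
    (hf0 : 0 < f 0) (hfnonneg : ∀ i, 1 ≤ i → i ≤ n → 0 ≤ f i)
    (hF0 : 0 < F 0) (hFnonpos : ∀ i, d ≤ i → i ≤ n → F i ≤ 0) :
    2 ^ n * K ≤ F 0 / f 0 :=
  stmt1_general n d K hK A B hA0 hB0 hAnonneg hBnonneg hBzero hAB f F hF hf0 hfnonneg hFnonpos
end

section
/- Let n ≥ 1 and d ≥ 1 be integers and K > 0 a real number, and let A, B : {0,1,…,n} → ℝ satisfy the normalized quantum enumerator conditions: A_0 = B_0 = 1; A_i ≥ 0 and B_i ≥ 0 for all 0 ≤ i ≤ n; A_i = B_i = 0 for 1 ≤ i ≤ d−1; and A_t = (1/(2^n K)) · Σ_{i=0}^{n} B_i · P_t(i,n) for every 0 ≤ t ≤ n. Then K ≤ 2^{n−2d+2} (the quantum Singleton bound, where 2^{n−2d+2} is interpreted as a real number even if the exponent is negative). -/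
open Finset

open Polynomial

lemma reindex {M : Type*} [AddCommMonoid M] (n : ℕ) (G : ℕ → ℕ → M) :
    ∑ t ∈ range (n+1), ∑ j ∈ range (t+1), G j (t-j)
      = ∑ p ∈ (range (n+1)).sigma (fun j => range (n+1-j)), G p.1 p.2 := by
  rw [Finset.sum_sigma']
  apply Finset.sum_nbij' (i := fun p => (⟨p.2, p.1 - p.2⟩ : Σ _ : ℕ, ℕ))
    (j := fun p => (⟨p.1 + p.2, p.1⟩ : Σ _ : ℕ, ℕ))
  · rintro ⟨a1, a2⟩ ha
    simp only [Finset.mem_sigma, Finset.mem_range] at *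
    omega
  · rintro ⟨a1, a2⟩ ha
    simp only [Finset.mem_sigma, Finset.mem_range] at *
    omega
  · rintro ⟨a1, a2⟩ ha
    simp only [Finset.mem_sigma, Finset.mem_range] at ha
    have h1 : a2 + (a1 - a2) = a1 := by omega
    simp only [h1]
  · rintro ⟨a1, a2⟩ ha
    simp only [Finset.mem_sigma, Finset.mem_range] at ha
    have h1 : a1 + a2 - a1 = a2 := by omega
    simp only [h1]
  · rintro ⟨a1, a2⟩ ha
    rfl


noncomputable def Fp (n x j k : ℕ) : ℝ[X] :=
  Polynomial.C ((-1 : ℝ) ^ j * 3 ^ k * (Nat.choose x j) * (Nat.choose (n - x) k)) *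
    (X + 1) ^ (n - j - k)

lemma kraw_poly (n x : ℕ) (hx : x ≤ n) :
    ∑ t ∈ range (n+1), Polynomial.C (kraw n t x) * (X + 1 : ℝ[X]) ^ (n - t)
      = X ^ x * (X + Polynomial.C 4) ^ (n - x) := by
  have hL : ∑ t ∈ range (n+1), Polynomial.C (kraw n t x) * (X + 1 : ℝ[X]) ^ (n - t)
      = ∑ t ∈ range (n+1), ∑ j ∈ range (t+1), Fp n x j (t - j) := by
    refine Finset.sum_congr rfl fun t ht => ?_
    rw [kraw, map_sum, Finset.sum_mul]
    refine Finset.sum_congr rfl fun j hj => ?_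
    simp only [Finset.mem_range] at ht hj
    unfold Fp
    have : n - j - (t - j) = n - t := by omega
    rw [this]
  rw [hL, reindex]
  have hX : (X : ℝ[X]) ^ x
      = ∑ j ∈ range (x+1), (-1 : ℝ[X]) ^ j * (X+1) ^ (x-j) * (Nat.choose x j : ℝ[X]) := by
    have e1 : (X:ℝ[X]) = (-1) + (X+1) := by ring
    calc (X:ℝ[X])^x = ((-1 : ℝ[X]) + (X+1))^x := by rw [← e1]
      _ = _ := add_pow _ _ _
  have h4 : ((X : ℝ[X]) + Polynomial.C 4) ^ (n-x)
      = ∑ k ∈ range (n-x+1), (3 : ℝ[X]) ^ k * (X+1) ^ (n-x-k) * (Nat.choose (n-x) k : ℝ[X]) := by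
    have e1 : (X:ℝ[X]) + Polynomial.C 4 = 3 + (X+1) := by
      rw [show (4:ℝ) = ((4:ℕ):ℝ) by norm_num, Polynomial.C_eq_natCast]
      push_cast
      ring
    calc ((X:ℝ[X]) + Polynomial.C 4)^(n-x) = ((3 : ℝ[X]) + (X+1))^(n-x) := by rw [← e1]
      _ = _ := add_pow _ _ _
  rw [hX, h4, Finset.sum_mul_sum]
  -- now RHS is a double sum over range(x+1) x range(n-x+1)
  have hR : ∀ j ∈ range (x+1), ∀ k ∈ range (n-x+1),
      ((-1 : ℝ[X]) ^ j * (X+1) ^ (x-j) * (Nat.choose x j : ℝ[X])) *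
        ((3 : ℝ[X]) ^ k * (X+1) ^ (n-x-k) * (Nat.choose (n-x) k : ℝ[X])) = Fp n x j k := by
    intro j hj k hk
    simp only [Finset.mem_range] at hj hk
    unfold Fp
    have hexp : (x - j) + (n - x - k) = n - j - k := by omega
    simp only [map_mul, map_pow, map_neg, map_one, Polynomial.C_eq_natCast, map_ofNat]
    rw [← hexp, pow_add]
    ring
  have hsub : (range (x+1)).sigma (fun _ => range (n-x+1)) ⊆
      (range (n+1)).sigma (fun j => range (n+1-j)) := by
    rintro ⟨a1, a2⟩ h
    simp only [Finset.mem_sigma, Finset.mem_range] at *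
    omega
  have hzero : ∀ p ∈ (range (n+1)).sigma (fun j => range (n+1-j)),
      p ∉ (range (x+1)).sigma (fun _ => range (n-x+1)) → Fp n x p.1 p.2 = 0 := by
    rintro ⟨a1, a2⟩ h1 h2
    simp only [Finset.mem_sigma, Finset.mem_range] at h1 h2
    unfold Fp
    rcases (by omega : x < a1 ∨ n - x < a2) with h | h
    · rw [Nat.choose_eq_zero_of_lt h]
      simp
    · rw [Nat.choose_eq_zero_of_lt h]
      simp
  calc ∑ p ∈ (range (n+1)).sigma (fun j => range (n+1-j)), Fp n x p.1 p.2
      = ∑ p ∈ (range (x+1)).sigma (fun _ => range (n-x+1)), Fp n x p.1 p.2 :=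
        (Finset.sum_subset hsub hzero).symm
    _ = ∑ j ∈ range (x+1), ∑ k ∈ range (n-x+1), Fp n x j k := Finset.sum_sigma _ _ _
    _ = _ := by
        refine Finset.sum_congr rfl fun j hj => Finset.sum_congr rfl fun k hk => ?_
        exact (hR j hj k hk).symm

lemma kraw_sum (n x m : ℕ) (hx : x ≤ n) (hm : m ≤ n) :
    ∑ t ∈ range (n+1), kraw n t x * ((n-t).choose m : ℝ)
      = if x ≤ m then (4:ℝ)^(n-m) * ((n-x).choose (m-x)) else 0 := by
  have h := congrArg (fun p : ℝ[X] => p.coeff m) (kraw_poly n x hx)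
  simp only [Polynomial.finset_sum_coeff, Polynomial.coeff_C_mul,
    Polynomial.coeff_X_add_one_pow] at h
  rw [mul_comm, Polynomial.coeff_mul_X_pow', Polynomial.coeff_X_add_C_pow] at h
  rw [h]
  by_cases hxm : x ≤ m
  · rw [if_pos hxm, if_pos hxm]
    have : n - x - (m - x) = n - m := by omega
    rw [this]
  · rw [if_neg hxm, if_neg hxm]


/-- The quantum Singleton bound: under the normalized quantum enumerator conditions of a
nondegenerate `((n,K,d))` quantum code, `K ≤ 2^{n−2d+2}` (real power, possibly with
negative exponent). -/
theorem stmt2 (n d : ℕ) (hn : 1 ≤ n) (hd : 1 ≤ d) (K : ℝ) (hK : 0 < K) (A B : ℕ → ℝ)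
    (hA0 : A 0 = 1) (hB0 : B 0 = 1)
    (hAnonneg : ∀ i ≤ n, 0 ≤ A i) (hBnonneg : ∀ i ≤ n, 0 ≤ B i)
    (hAzero : ∀ i, 1 ≤ i → i ≤ d - 1 → A i = 0)
    (hBzero : ∀ i, 1 ≤ i → i ≤ d - 1 → B i = 0)
    (hAB : ∀ t ≤ n, A t = (1 / (2 ^ n * K)) * ∑ i ∈ Finset.range (n + 1), B i * kraw n t i) :
    K ≤ (2 : ℝ) ^ ((n : ℤ) - 2 * d + 2) := by
  have h2K : (0:ℝ) < 2 ^ n * K := by positivity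
  by_cases hdn : d ≤ n + 1
  · -- main case
    set m := d - 1 with hm
    have hmn : m ≤ n := by omega
    -- compute the weighted sum of A
    have hsum : ∑ t ∈ range (n+1), A t * ((n-t).choose m : ℝ)
        = 1 / (2 ^ n * K) * ((4:ℝ)^(n-m) * (n.choose m)) := by
      have e1 : ∑ t ∈ range (n+1), A t * ((n-t).choose m : ℝ)
          = 1 / (2 ^ n * K) *
            ∑ i ∈ range (n+1), B i * ∑ t ∈ range (n+1), kraw n t i * ((n-t).choose m : ℝ) := by
        rw [Finset.mul_sum]
        rw [show ∑ i ∈ range (n+1), 1 / (2 ^ n * K) *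
              (B i * ∑ t ∈ range (n+1), kraw n t i * ((n-t).choose m : ℝ))
            = ∑ i ∈ range (n+1), ∑ t ∈ range (n+1),
              1 / (2 ^ n * K) * (B i * kraw n t i) * ((n-t).choose m : ℝ) by
          refine Finset.sum_congr rfl fun i hi => ?_
          rw [Finset.mul_sum, Finset.mul_sum]
          refine Finset.sum_congr rfl fun t ht => ?_
          ring]
        rw [Finset.sum_comm]
        refine Finset.sum_congr rfl fun t ht => ?_
        rw [hAB t (by simpa using Nat.lt_succ_iff.mp (Finset.mem_range.mp ht)),
          Finset.mul_sum, Finset.sum_mul]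
      rw [e1]
      congr 1
      rw [show ∑ i ∈ range (n+1), B i * ∑ t ∈ range (n+1), kraw n t i * ((n-t).choose m : ℝ)
          = ∑ i ∈ range (n+1), B i *
              (if i ≤ m then (4:ℝ)^(n-m) * ((n-i).choose (m-i)) else 0) by
        refine Finset.sum_congr rfl fun i hi => ?_
        rw [kraw_sum n i m (by simpa using Nat.lt_succ_iff.mp (Finset.mem_range.mp hi)) hmn]]
      rw [Finset.sum_eq_single 0]
      · simp [hB0]
      · intro i hi hi0
        by_cases him : i ≤ m
        · rw [hBzero i (by omega) (by omega)]
          ring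
        · rw [if_neg him, mul_zero]
      · intro h
        exact absurd (Finset.mem_range.mpr (by omega)) h
    -- lower bound the weighted sum
    have hlow : (n.choose m : ℝ) ≤ ∑ t ∈ range (n+1), A t * ((n-t).choose m : ℝ) := by
      have := Finset.single_le_sum (f := fun t => A t * ((n-t).choose m : ℝ))
        (fun t ht => mul_nonneg
          (hAnonneg t (by simpa using Nat.lt_succ_iff.mp (Finset.mem_range.mp ht)))
          (by positivity))
        (Finset.mem_range.mpr (by omega : 0 < n + 1))
      simpa [hA0] using this
    have hCpos : (0:ℝ) < (n.choose m : ℝ) := by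
      exact_mod_cast Nat.choose_pos hmn
    rw [hsum] at hlow
    -- derive 2^n * K ≤ 4^(n-m)
    have hstep : 2 ^ n * K ≤ (4:ℝ)^(n-m) := by
      rw [div_mul_eq_mul_div, one_mul, le_div_iff₀ h2K] at hlow
      nlinarith
    have hKle : K ≤ (4:ℝ)^(n-m) / 2 ^ n := by
      rw [le_div_iff₀ (by positivity : (0:ℝ) < 2 ^ n)]
      linarith
    refine hKle.trans_eq ?_
    calc (4:ℝ)^(n-m) / 2 ^ n
        = (2:ℝ)^(2*(n-m)) / 2 ^ n := by rw [show (4:ℝ) = 2^2 by norm_num, ← pow_mul]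
      _ = (2:ℝ)^((2*(n-m) : ℕ) : ℤ) / (2:ℝ)^((n:ℕ) : ℤ) := by
          rw [zpow_natCast, zpow_natCast]
      _ = (2:ℝ)^(((2*(n-m) : ℕ) : ℤ) - (n : ℤ)) := by
          rw [← zpow_sub₀ (by norm_num : (2:ℝ) ≠ 0)]
      _ = (2:ℝ)^((n : ℤ) - 2 * d + 2) := by
          congr 1
          omega
  · -- degenerate case: contradiction
    exfalso
    have h1 : A 1 = 0 := hAzero 1 le_rfl (by omega)
    have h2 := hAB 1 hn
    have h3 : ∑ i ∈ range (n+1), B i * kraw n 1 i = 3 * n := by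
      rw [Finset.sum_eq_single 0]
      · have : kraw n 1 0 = 3 * n := by
          simp [kraw, Finset.sum_range_succ]
        rw [hB0, this, one_mul]
      · intro i hi hi0
        have hi' : i ≤ n := Nat.lt_succ_iff.mp (Finset.mem_range.mp hi)
        rw [hBzero i (by omega) (by omega), zero_mul]
      · intro h
        exact absurd (Finset.mem_range.mpr (by omega)) h
    rw [h1, h3] at h2
    have : (0:ℝ) < 1 / (2 ^ n * K) * (3 * n) := by
      apply mul_pos (by positivity)
      have : (0:ℝ) < (n:ℝ) := by exact_mod_cast hn
      linarith
    linarith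
end

section
/- Let n ≥ 1 and d ≥ 1 be integers and K > 0 a real number, and let A, B : {0,1,…,n} → ℝ satisfy the normalized quantum enumerator conditions: A_0 = B_0 = 1; A_i ≥ 0 and B_i ≥ 0 for all 0 ≤ i ≤ n; A_i = B_i = 0 for 1 ≤ i ≤ d−1; and A_t = (1/(2^n K)) · Σ_{i=0}^{n} B_i · P_t(i,n) for every 0 ≤ t ≤ n. If moreover K = 2^{n−2d+2} (i.e., the code meets the quantum Singleton bound), then A_i = 0 for all 1 ≤ i ≤ n−d+1; that is, the code is nondegenerate up to n−d+2. -/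
open Finset

/-- per-term Vandermonde expansion -/
lemma vand_term (n x t j : ℕ) (hx : x ≤ n) :
    (Nat.choose x j : ℝ) * (Nat.choose (n - j) (t - j))
      = ∑ k ∈ range (t - j + 1),
          (Nat.choose x j : ℝ) * (Nat.choose (n - x) k) * (Nat.choose (x - j) (t - j - k)) := by
  rcases le_or_gt j x with hj | hj
  · have hnj : n - j = (n - x) + (x - j) := by omega
    have hv := Nat.add_choose_eq (n - x) (x - j) (t - j)
    rw [Finset.Nat.sum_antidiagonal_eq_sum_range_succ_mk] at hv
    rw [hnj, hv]
    push_cast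
    rw [Finset.mul_sum]
    exact Finset.sum_congr rfl (fun k _ => by ring)
  · simp [Nat.choose_eq_zero_of_lt hj]

lemma choose_trinomial (x s j : ℕ) (hjs : j ≤ s) :
    (Nat.choose x s) * (Nat.choose s j) = (Nat.choose x j) * (Nat.choose (x - j) (s - j)) := by
  rcases le_or_gt s x with h | h
  · exact Nat.choose_mul (n := x) hjs
  · rw [Nat.choose_eq_zero_of_lt h, zero_mul]
    rcases le_or_gt j x with h2 | h2
    · rw [Nat.choose_eq_zero_of_lt (by omega : x - j < s - j), mul_zero]
    · rw [Nat.choose_eq_zero_of_lt h2, zero_mul]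

lemma tri_swap {M : Type*} [AddCommMonoid M] (n : ℕ) (f : ℕ → ℕ → M) :
    ∑ i ∈ range (n + 1), ∑ j ∈ range (n - i + 1), f i j
      = ∑ j ∈ range (n + 1), ∑ i ∈ range (n - j + 1), f i j := by
  rw [Finset.sum_sigma', Finset.sum_sigma']
  refine Finset.sum_nbij' (fun x => ⟨x.2, x.1⟩) (fun x => ⟨x.2, x.1⟩) ?_ ?_
    (fun _ _ => rfl) (fun _ _ => rfl) (fun _ _ => rfl) <;>
  · simp only [Finset.mem_sigma, Finset.mem_range, Sigma.forall]
    intro a b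
    omega

lemma binom_neg (s : ℕ) :
    ∑ j ∈ range (s + 1), (Nat.choose s j : ℝ) * (-4) ^ j * 3 ^ (s - j) = (-1) ^ s := by
  have hb := add_pow (-4 : ℝ) 3 s
  norm_num at hb
  rw [hb]
  exact Finset.sum_congr rfl (fun j _ => by ring)

lemma kraw_alt (n t x : ℕ) (hx : x ≤ n) :
    kraw n t x
      = ∑ j ∈ range (t + 1), (-4 : ℝ) ^ j * 3 ^ (t - j) * (Nat.choose x j) * (Nat.choose (n - j) (t - j)) := by
  have hC : kraw n t x
      = ∑ k ∈ range (t + 1), (-1 : ℝ) ^ (t - k) * 3 ^ k * (Nat.choose x (t - k)) * (Nat.choose (n - x) k) := by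
    rw [kraw, ← Finset.sum_range_reflect]
    refine Finset.sum_congr rfl (fun k hk => ?_)
    have hkt : k ≤ t := by simpa using Nat.lt_succ_iff.mp (Finset.mem_range.mp hk)
    have e1 : t + 1 - 1 - k = t - k := by omega
    have e2 : t - (t - k) = k := by omega
    rw [e1, e2]
  rw [hC]
  have step1 : ∀ j ∈ range (t + 1),
      (-4 : ℝ) ^ j * 3 ^ (t - j) * (Nat.choose x j) * (Nat.choose (n - j) (t - j))
        = ∑ k ∈ range (t - j + 1),
            (-4 : ℝ) ^ j * 3 ^ (t - j) * ((Nat.choose x j : ℝ) * (Nat.choose (n - x) k) * (Nat.choose (x - j) (t - j - k))) := by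
    intro j _
    rw [← Finset.mul_sum, ← vand_term n x t j hx]
    ring
  rw [Finset.sum_congr rfl step1, tri_swap t]
  refine (Finset.sum_congr rfl (fun k hk => ?_)).symm
  have hkt : k ≤ t := by simpa using Nat.lt_succ_iff.mp (Finset.mem_range.mp hk)
  have inner : ∀ j ∈ range (t - k + 1),
      (-4 : ℝ) ^ j * 3 ^ (t - j) * ((Nat.choose x j : ℝ) * (Nat.choose (n - x) k) * (Nat.choose (x - j) (t - j - k)))
        = ((-1:ℝ)^(t-k) * 3 ^ k * (Nat.choose x (t - k)) * (Nat.choose (n - x) k)) *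
            (((Nat.choose (t - k) j : ℝ) * (-4) ^ j * 3 ^ ((t - k) - j)) * ((-1:ℝ)^(t-k))⁻¹) := by
    intro j hj
    have hjs : j ≤ t - k := by simpa using Nat.lt_succ_iff.mp (Finset.mem_range.mp hj)
    have e1 : t - j - k = (t - k) - j := by omega
    have e2 : t - j = k + ((t - k) - j) := by omega
    have tc : ((Nat.choose x (t-k) : ℝ)) * (Nat.choose (t-k) j) = (Nat.choose x j) * (Nat.choose (x - j) ((t-k) - j)) := by
      exact_mod_cast congrArg (fun z : ℕ => (z : ℝ)) (choose_trinomial x (t - k) j hjs)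
    have hinv : ((-1:ℝ)^(t-k)) * ((-1:ℝ)^(t-k))⁻¹ = 1 := by
      apply mul_inv_cancel₀
      positivity
    rw [e1, e2, pow_add]
    calc (-4 : ℝ) ^ j * (3 ^ k * 3 ^ (t - k - j)) * ((Nat.choose x j : ℝ) * (Nat.choose (n - x) k) * (Nat.choose (x - j) ((t-k) - j)))
        = ((Nat.choose x j : ℝ) * (Nat.choose (x - j) ((t-k) - j))) * ((-4:ℝ)^j * 3^k * 3^(t-k-j) * (Nat.choose (n-x) k)) := by ring
      _ = ((Nat.choose x (t-k) : ℝ) * (Nat.choose (t-k) j)) * ((-4:ℝ)^j * 3^k * 3^(t-k-j) * (Nat.choose (n-x) k)) := by rw [tc]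
      _ = (((-1:ℝ)^(t-k) * ((-1:ℝ)^(t-k))⁻¹) * (Nat.choose x (t-k) : ℝ) * (Nat.choose (t-k) j)) * ((-4:ℝ)^j * 3^k * 3^(t-k-j) * (Nat.choose (n-x) k)) := by rw [hinv]; ring_nf
      _ = ((-1:ℝ)^(t-k) * 3 ^ k * (Nat.choose x (t - k)) * (Nat.choose (n - x) k)) *
            (((Nat.choose (t - k) j : ℝ) * (-4) ^ j * 3 ^ ((t - k) - j)) * ((-1:ℝ)^(t-k))⁻¹) := by ring
  rw [Finset.sum_congr rfl inner, ← Finset.mul_sum, ← Finset.sum_mul, binom_neg (t - k)]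
  rw [mul_inv_cancel₀ (by positivity : ((-1:ℝ)^(t-k)) ≠ 0), mul_one]

lemma tri_diag {M : Type*} [AddCommMonoid M] (m : ℕ) (g : ℕ → ℕ → M) :
    ∑ t ∈ range (m + 1), ∑ j ∈ range (t + 1), g t j
      = ∑ j ∈ range (m + 1), ∑ s ∈ range (m - j + 1), g (j + s) j := by
  rw [Finset.sum_sigma', Finset.sum_sigma']
  refine Finset.sum_nbij' (fun x => ⟨x.2, x.1 - x.2⟩) (fun x => ⟨x.1 + x.2, x.1⟩) ?_ ?_ ?_ ?_ ?_ <;>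
    simp only [Finset.mem_sigma, Finset.mem_range, Sigma.forall] <;> intro a b h
  · omega
  · omega
  · have : b + (a - b) = a := by omega
    simp [this]
  · have : a + b - a = b := by omega
    simp [this]
  · have : b + (a - b) = a := by omega
    rw [this]

lemma krinner_sum (N M : ℕ) (h : M ≤ N) :
    ∑ s ∈ range (M + 1), (3 : ℝ) ^ s * (Nat.choose N s) * (Nat.choose (N - s) (M - s))
      = (Nat.choose N M) * 4 ^ M := by
  have : ∀ s ∈ range (M + 1), (3 : ℝ) ^ s * (Nat.choose N s) * (Nat.choose (N - s) (M - s))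
      = (Nat.choose N M) * ((Nat.choose M s) * 3 ^ s) := by
    intro s hs
    have hsM : s ≤ M := by simpa using Nat.lt_succ_iff.mp (Finset.mem_range.mp hs)
    have := Nat.choose_mul (n := N) hsM
    have hc : ((Nat.choose N s : ℝ)) * (Nat.choose (N - s) (M - s)) = (Nat.choose N M) * (Nat.choose M s) := by
      exact_mod_cast congrArg (fun z : ℕ => (z : ℝ)) this.symm
    calc (3 : ℝ) ^ s * (Nat.choose N s) * (Nat.choose (N - s) (M - s))
        = ((Nat.choose N s : ℝ) * (Nat.choose (N - s) (M - s))) * 3 ^ s := by ring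
      _ = (Nat.choose N M) * ((Nat.choose M s) * 3 ^ s) := by rw [hc]; ring
  rw [Finset.sum_congr rfl this, ← Finset.mul_sum]
  congr 1
  have hb := add_pow (3 : ℝ) 1 M
  simp only [one_pow, mul_one] at hb
  norm_num at hb
  rw [hb]
  exact Finset.sum_congr rfl (fun s _ => by ring)

/-- Inclusion-exclusion binomial identity. -/
lemma incl_excl : ∀ (a : ℕ), ∀ (N k : ℕ), a ≤ N →
    ∑ i ∈ range (k + 1), (-1 : ℝ) ^ i * (Nat.choose a i) * (Nat.choose (N - i) (k - i))
      = Nat.choose (N - a) k := by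
  intro a
  induction a with
  | zero =>
    intro N k _
    rw [Finset.sum_eq_single 0]
    · simp
    · intro b _ hb
      rcases Nat.exists_eq_succ_of_ne_zero hb with ⟨c, rfl⟩
      simp [Nat.choose_eq_zero_of_lt (Nat.succ_pos c)]
    · simp
  | succ a ih =>
    intro N k ha
    have ha' : a ≤ N - 1 := by omega
    have hsplit : ∀ i, ((a + 1).choose i : ℝ)
        = Nat.choose a i + (if i = 0 then 0 else (Nat.choose a (i - 1) : ℝ)) := by
      intro i
      cases i with
      | zero => simp
      | succ i => push_cast [Nat.choose_succ_succ]; ring_nf; simp [add_comm]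
    have hsum : ∑ i ∈ range (k + 1), (-1 : ℝ) ^ i * ((a+1).choose i) * (Nat.choose (N - i) (k - i))
        = (∑ i ∈ range (k + 1), (-1 : ℝ) ^ i * (Nat.choose a i) * (Nat.choose (N - i) (k - i)))
          + ∑ i ∈ range (k + 1), (-1 : ℝ) ^ i * (if i = 0 then 0 else (Nat.choose a (i-1) : ℝ)) * (Nat.choose (N - i) (k - i)) := by
      rw [← Finset.sum_add_distrib]
      exact Finset.sum_congr rfl (fun i _ => by rw [hsplit]; ring)
    rw [hsum, ih N k (by omega)]
    rw [Finset.sum_range_succ']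
    simp only [if_pos rfl, mul_zero, zero_mul, add_zero, if_neg (Nat.succ_ne_zero _)]
    cases k with
    | zero => simp
    | succ k =>
      have h2 : ∑ i ∈ range (k + 1), (-1:ℝ)^(i+1) * (Nat.choose a ((i+1)-1)) * (Nat.choose (N - (i+1)) (k+1-(i+1)))
          = -∑ i ∈ range (k + 1), (-1:ℝ)^i * (Nat.choose a i) * (Nat.choose ((N-1) - i) (k - i)) := by
        rw [← Finset.sum_neg_distrib]
        refine Finset.sum_congr rfl (fun i _ => ?_)
        have e1 : N - (i+1) = (N-1) - i := by omega
        have e2 : k + 1 - (i+1) = k - i := by omega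
        have e0 : i + 1 - 1 = i := by omega
        rw [e0, e1, e2, pow_succ]
        ring
      rw [h2, ih (N-1) k ha']
      have e3 : N - a = (N - (a+1)) + 1 := by omega
      have e4 : N - 1 - a = N - (a+1) := by omega
      rw [e3, e4, Nat.choose_succ_succ]
      push_cast
      ring

lemma kraw_key (n m x : ℕ) (hx : x ≤ n) (hm : m ≤ n) :
    ∑ t ∈ range (m + 1), (Nat.choose (n - t) (m - t) : ℝ) * kraw n t x
      = 4 ^ m * (Nat.choose (n - x) m) := by
  have step0 : ∀ t ∈ range (m + 1),
      (Nat.choose (n - t) (m - t) : ℝ) * kraw n t x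
        = ∑ j ∈ range (t + 1),
            (Nat.choose (n - t) (m - t) : ℝ) * ((-4 : ℝ) ^ j * 3 ^ (t - j) * (Nat.choose x j) * (Nat.choose (n - j) (t - j))) := by
    intro t _
    rw [kraw_alt n t x hx, Finset.mul_sum]
  rw [Finset.sum_congr rfl step0, tri_diag m]
  have step2 : ∀ j ∈ range (m + 1),
      (∑ s ∈ range (m - j + 1),
        (Nat.choose (n - (j + s)) (m - (j + s)) : ℝ) * ((-4 : ℝ) ^ j * 3 ^ ((j + s) - j) * (Nat.choose x j) * (Nat.choose (n - j) ((j + s) - j))))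
        = (-1 : ℝ) ^ j * 4 ^ m * (Nat.choose x j) * (Nat.choose (n - j) (m - j)) := by
    intro j hj
    have hjm : j ≤ m := by simpa using Nat.lt_succ_iff.mp (Finset.mem_range.mp hj)
    have hin : ∀ s ∈ range (m - j + 1),
        (Nat.choose (n - (j + s)) (m - (j + s)) : ℝ) * ((-4 : ℝ) ^ j * 3 ^ ((j + s) - j) * (Nat.choose x j) * (Nat.choose (n - j) ((j + s) - j)))
          = ((-4 : ℝ) ^ j * (Nat.choose x j)) * ((3 : ℝ) ^ s * (Nat.choose (n - j) s) * (Nat.choose ((n - j) - s) ((m - j) - s))) := by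
      intro s _
      have e1 : (j + s) - j = s := by omega
      have e2 : n - (j + s) = (n - j) - s := by omega
      have e3 : m - (j + s) = (m - j) - s := by omega
      rw [e1, e2, e3]
      ring
    rw [Finset.sum_congr rfl hin, ← Finset.mul_sum, krinner_sum (n - j) (m - j) (by omega)]
    have e4 : (-4 : ℝ) ^ j = (-1 : ℝ) ^ j * 4 ^ j := by
      rw [← mul_pow]; norm_num
    have e5 : (4 : ℝ) ^ j * 4 ^ (m - j) = 4 ^ m := by
      rw [← pow_add]
      congr 1
      omega
    calc ((-4 : ℝ) ^ j * (Nat.choose x j)) * ((Nat.choose (n - j) (m - j) : ℝ) * 4 ^ (m - j))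
        = ((-1:ℝ)^j * (Nat.choose x j)) * ((4:ℝ)^j * 4^(m-j)) * (Nat.choose (n - j) (m - j)) := by rw [e4]; ring
      _ = (-1 : ℝ) ^ j * 4 ^ m * (Nat.choose x j) * (Nat.choose (n - j) (m - j)) := by rw [e5]; ring
  rw [Finset.sum_congr rfl step2]
  have : ∀ j ∈ range (m + 1),
      (-1 : ℝ) ^ j * 4 ^ m * (Nat.choose x j) * (Nat.choose (n - j) (m - j))
        = (4:ℝ)^m * ((-1 : ℝ) ^ j * (Nat.choose x j) * (Nat.choose (n - j) (m - j))) := by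
    intro j _; ring
  rw [Finset.sum_congr rfl this, ← Finset.mul_sum, incl_excl x n m hx]
/-- A quantum code meeting the Singleton bound `K = 2^{n−2d+2}` is nondegenerate up to
`n−d+2`, i.e. `A_i = 0` for all `1 ≤ i ≤ n−d+1`. -/
theorem stmt3 (n d : ℕ) (hn : 1 ≤ n) (hd : 1 ≤ d) (K : ℝ) (hK : 0 < K) (A B : ℕ → ℝ)
    (hA0 : A 0 = 1) (hB0 : B 0 = 1)
    (hAnonneg : ∀ i ≤ n, 0 ≤ A i) (hBnonneg : ∀ i ≤ n, 0 ≤ B i)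
    (hAzero : ∀ i, 1 ≤ i → i ≤ d - 1 → A i = 0)
    (hBzero : ∀ i, 1 ≤ i → i ≤ d - 1 → B i = 0)
    (hAB : ∀ t ≤ n, A t = (1 / (2 ^ n * K)) * ∑ i ∈ Finset.range (n + 1), B i * kraw n t i)
    (hSingleton : K = (2 : ℝ) ^ ((n : ℤ) - 2 * d + 2)) :
    ∀ i, 1 ≤ i → i + d ≤ n + 1 → A i = 0 := by
  intro i hi1 hi2
  have hdn : d ≤ n := by omega
  set m : ℕ := n - d + 1 with hm
  have hmn : m ≤ n := by omega
  have him : i ≤ m := by omega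
  -- 2^n * K = 4^m
  have h2K : (2 : ℝ) ^ n * K = 4 ^ m := by
    rw [hSingleton]
    have e1 : (2 : ℝ) ^ n = (2 : ℝ) ^ ((n : ℤ)) := by rw [zpow_natCast]
    rw [e1, ← zpow_add₀ (two_ne_zero)]
    have e2 : (n : ℤ) + ((n : ℤ) - 2 * d + 2) = ((2 * m : ℕ) : ℤ) := by
      push_cast; omega
    rw [e2, zpow_natCast, pow_mul]
    norm_num
  have h4m : (0:ℝ) < 4 ^ m := by positivity
  -- the inner B-sum collapses
  have hBsum : ∑ x ∈ Finset.range (n + 1), B x * (4 ^ m * (Nat.choose (n - x) m : ℝ))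
      = 4 ^ m * (Nat.choose n m : ℝ) := by
    rw [Finset.sum_eq_single_of_mem 0 (Finset.mem_range.mpr (by omega))]
    · simp [hB0]
    · intro b hb hb0
      have hbn : b ≤ n := by simpa using Nat.lt_succ_iff.mp (Finset.mem_range.mp hb)
      rcases le_or_gt b (d - 1) with hbd | hbd
      · rw [hBzero b (by omega) hbd, zero_mul]
      · have : n - b < m := by omega
        rw [Nat.choose_eq_zero_of_lt this]
        simp
  -- evaluate S via the Krawtchouk identity
  have hS1 : ∑ t ∈ Finset.range (m + 1), (Nat.choose (n - t) (m - t) : ℝ) * A t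
      = (Nat.choose n m : ℝ) := by
    have step : ∀ t ∈ Finset.range (m + 1),
        (Nat.choose (n - t) (m - t) : ℝ) * A t
          = (1 / (2 ^ n * K)) * ∑ x ∈ Finset.range (n + 1),
              B x * ((Nat.choose (n - t) (m - t) : ℝ) * kraw n t x) := by
      intro t ht
      have htn : t ≤ n := le_trans (by simpa using Nat.lt_succ_iff.mp (Finset.mem_range.mp ht)) hmn
      rw [hAB t htn]
      simp only [Finset.mul_sum]
      exact Finset.sum_congr rfl (fun x _ => by ring)
    rw [Finset.sum_congr rfl step, ← Finset.mul_sum, Finset.sum_comm]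
    have hinner : ∀ x ∈ Finset.range (n + 1),
        ∑ t ∈ Finset.range (m + 1), B x * ((Nat.choose (n - t) (m - t) : ℝ) * kraw n t x)
          = B x * (4 ^ m * (Nat.choose (n - x) m : ℝ)) := by
      intro x hx
      have hxn : x ≤ n := by simpa using Nat.lt_succ_iff.mp (Finset.mem_range.mp hx)
      rw [← Finset.mul_sum, kraw_key n m x hxn hmn]
    rw [Finset.sum_congr rfl hinner, hBsum, h2K]
    field_simp
  -- split off the t = 0 term
  have hS2 : ∑ t ∈ Finset.range (m + 1), (Nat.choose (n - t) (m - t) : ℝ) * A t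
      = (∑ t ∈ Finset.range m, (Nat.choose (n - (t + 1)) (m - (t + 1)) : ℝ) * A (t + 1))
        + (Nat.choose n m : ℝ) := by
    rw [Finset.sum_range_succ']
    simp [hA0]
  have hrest : ∑ t ∈ Finset.range m, (Nat.choose (n - (t + 1)) (m - (t + 1)) : ℝ) * A (t + 1) = 0 := by
    have := hS1
    rw [hS2] at this
    linarith
  have hnonneg : ∀ t ∈ Finset.range m,
      0 ≤ (Nat.choose (n - (t + 1)) (m - (t + 1)) : ℝ) * A (t + 1) := by
    intro t ht
    have : t + 1 ≤ n := by
      have := Finset.mem_range.mp ht; omega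
    exact mul_nonneg (Nat.cast_nonneg _) (hAnonneg (t + 1) this)
  have hzero := (Finset.sum_eq_zero_iff_of_nonneg hnonneg).mp hrest
  have hiz := hzero (i - 1) (Finset.mem_range.mpr (by omega))
  have ei : i - 1 + 1 = i := by omega
  rw [ei] at hiz
  have hcpos : (0 : ℝ) < (Nat.choose (n - i) (m - i) : ℝ) := by
    exact_mod_cast Nat.choose_pos (by omega : m - i ≤ n - i)
  have := mul_eq_zero.mp hiz
  rcases this with h | h
  · exact absurd h (ne_of_gt hcpos)
  · exact h
end

section
/- Let n ≥ 1 and e ≥ 0 be integers, set d = 2e+1, let K > 0 be a real number, and let A, B : {0,1,…,n} → ℝ satisfy the normalized quantum enumerator conditions: A_0 = B_0 = 1; A_i ≥ 0 and B_i ≥ 0 for all 0 ≤ i ≤ n; A_i = B_i = 0 for 1 ≤ i ≤ d−1; and A_t = (1/(2^n K)) · Σ_{i=0}^{n} B_i · P_t(i,n) for every 0 ≤ t ≤ n. Then K ≤ 2^n / (Σ_{i=0}^{e} 3^i · C(n,i)) (the quantum Hamming bound). -/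
open Finset
open Polynomial

lemma kraw_arg_zero (n t : ℕ) : kraw n t 0 = 3 ^ t * (Nat.choose n t : ℝ) := by
  unfold kraw
  rw [Finset.sum_eq_single 0]
  · simp
  · intro j hj hj0
    simp [Nat.choose_eq_zero_of_lt (Nat.pos_of_ne_zero hj0)]
  · simp

lemma tri_sum (N : ℕ) (f : ℕ → ℕ → ℝ) :
    ∑ t ∈ range N, ∑ j ∈ range (t + 1), f j (t - j)
      = ∑ j ∈ range N, ∑ k ∈ range (N - j), f j k := by
  induction N with
  | zero => simp
  | succ N ih =>
    have h : ∑ j ∈ range (N + 1), ∑ k ∈ range (N + 1 - j), f j k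
        = (∑ j ∈ range (N + 1), ∑ k ∈ range (N - j), f j k)
          + ∑ j ∈ range (N + 1), f j (N - j) := by
      rw [← Finset.sum_add_distrib]
      refine Finset.sum_congr rfl fun j hj => ?_
      have hjN : j ≤ N := by simpa [Nat.lt_succ_iff] using hj
      rw [show N + 1 - j = (N - j) + 1 by omega, Finset.sum_range_succ]
    rw [Finset.sum_range_succ, ih, h,
      Finset.sum_range_succ (fun j => ∑ k ∈ range (N - j), f j k) N]
    simp

lemma choose_swap (M p q : ℕ) : Nat.choose M p * Nat.choose (M - p) q
    = Nat.choose M q * Nat.choose (M - q) p := by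
  by_cases h : p + q ≤ M
  · have h1 := Nat.choose_mul (n := M) (k := p + q) (s := p) (Nat.le_add_right p q)
    have h2 := Nat.choose_mul (n := M) (k := p + q) (s := q) (Nat.le_add_left q p)
    rw [show p + q - p = q by omega] at h1
    rw [show p + q - q = p by omega] at h2
    have h3 : Nat.choose (p + q) p = Nat.choose (p + q) q := by
      rw [← Nat.choose_symm (Nat.le_add_left q p), show p + q - q = p by omega]
    rw [← h1, ← h2, h3]
  · rcases le_or_gt p M with hp | hp
    · rcases le_or_gt q M with hq | hq
      · rw [Nat.choose_eq_zero_of_lt (show M - p < q by omega),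
          Nat.choose_eq_zero_of_lt (show M - q < p by omega)]
        ring
      · rw [Nat.choose_eq_zero_of_lt hq, Nat.choose_eq_zero_of_lt (show M - p < q by omega)]
        ring
    · rw [Nat.choose_eq_zero_of_lt hp, Nat.choose_eq_zero_of_lt (show M - q < p by omega)]
      ring

lemma kraw_symm (n x t : ℕ) (hx : x ≤ n) (ht : t ≤ n) :
    (3 : ℝ) ^ x * (Nat.choose n x : ℝ) * kraw n t x
      = 3 ^ t * (Nat.choose n t : ℝ) * kraw n x t := by
  unfold kraw
  rw [Finset.mul_sum, Finset.mul_sum]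
  rw [← Finset.sum_subset (Finset.range_subset_range.2 (show min t x + 1 ≤ t + 1 by omega))
      (fun j hj hj' => by
        have : x < j := by simp at hj hj' ⊢; omega
        simp [Nat.choose_eq_zero_of_lt this]),
    ← Finset.sum_subset (Finset.range_subset_range.2 (show min t x + 1 ≤ x + 1 by omega))
      (fun j hj hj' => by
        have : t < j := by simp at hj hj' ⊢; omega
        simp [Nat.choose_eq_zero_of_lt this])]
  refine Finset.sum_congr rfl fun j hj => ?_
  have hjt : j ≤ t := by simp at hj; omega
  have hjx : j ≤ x := by simp at hj; omega
  have hch : Nat.choose n x * Nat.choose x j * Nat.choose (n - x) (t - j)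
      = Nat.choose n t * Nat.choose t j * Nat.choose (n - t) (x - j) := by
    rw [Nat.choose_mul hjx, Nat.choose_mul hjt]
    have h1 := choose_swap (n - j) (x - j) (t - j)
    rw [show n - j - (x - j) = n - x by omega, show n - j - (t - j) = n - t by omega] at h1
    rw [mul_assoc, mul_assoc, h1]
  have hpow : (3 : ℝ) ^ x * 3 ^ (t - j) = 3 ^ t * 3 ^ (x - j) := by
    rw [← pow_add, ← pow_add]; congr 1; omega
  calc (3:ℝ) ^ x * (Nat.choose n x : ℝ) * ((-1:ℝ) ^ j * 3 ^ (t - j) * (Nat.choose x j : ℝ) * (Nat.choose (n - x) (t - j) : ℝ))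
      = (-1:ℝ) ^ j * ((3 ^ x * 3 ^ (t - j)) * ((Nat.choose n x * Nat.choose x j * Nat.choose (n - x) (t - j) : ℕ) : ℝ)) := by
        push_cast; ring
    _ = (-1:ℝ) ^ j * ((3 ^ t * 3 ^ (x - j)) * ((Nat.choose n t * Nat.choose t j * Nat.choose (n - t) (x - j) : ℕ) : ℝ)) := by
        rw [hpow, hch]
    _ = 3 ^ t * (Nat.choose n t : ℝ) * ((-1:ℝ) ^ j * 3 ^ (x - j) * (Nat.choose t j : ℝ) * (Nat.choose (n - t) (x - j) : ℝ)) := by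
        push_cast; ring

-- real alternating sum of binomials
lemma alt_sum_choose (M : ℕ) :
    ∑ j ∈ range (M + 1), (-1 : ℝ) ^ j * (Nat.choose M j : ℝ)
      = if M = 0 then 1 else 0 := by
  have h := Int.alternating_sum_range_choose (n := M)
  have h2 : ((∑ i ∈ range (M + 1), (-1 : ℤ) ^ i * (Nat.choose M i : ℤ) : ℤ) : ℝ)
      = ((if M = 0 then (1 : ℤ) else 0 : ℤ) : ℝ) := by rw [h]
  push_cast at h2
  rcases eq_or_ne M 0 with hM | hM
  · simpa [hM] using h2
  · simp only [if_neg hM] at h2 ⊢; exact h2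

-- the inner alternating sum
lemma alt_j_sum (n i a : ℕ) (hi : i ≤ n) (ha : a ≤ i) :
    ∑ j ∈ range (n + 1), (-1 : ℝ) ^ j * (Nat.choose i j : ℝ) * (Nat.choose j a : ℝ)
      = if a = i then (-1 : ℝ) ^ i else 0 := by
  have hsub : Finset.Ico a (i + 1) ⊆ range (n + 1) := by
    intro j hj; simp at hj ⊢; omega
  rw [← Finset.sum_subset hsub (fun j hj hj' => by
    simp only [Finset.mem_Ico, Finset.mem_range, not_and, not_lt] at hj hj'
    rcases lt_or_ge j a with h | h
    · simp [Nat.choose_eq_zero_of_lt h]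
    · have : i < j := by omega
      simp [Nat.choose_eq_zero_of_lt this])]
  have hre : ∀ j ∈ Finset.Ico a (i + 1),
      (-1 : ℝ) ^ j * (Nat.choose i j : ℝ) * (Nat.choose j a : ℝ)
        = (Nat.choose i a : ℝ) * ((-1 : ℝ) ^ j * (Nat.choose (i - a) (j - a) : ℝ)) := by
    intro j hj
    simp only [Finset.mem_Ico] at hj
    have h1 : Nat.choose i j * Nat.choose j a = Nat.choose i a * Nat.choose (i - a) (j - a) :=
      Nat.choose_mul hj.1
    calc (-1:ℝ)^j * (Nat.choose i j : ℝ) * (Nat.choose j a : ℝ)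
        = (-1:ℝ)^j * ((Nat.choose i j * Nat.choose j a : ℕ) : ℝ) := by push_cast; ring
      _ = (-1:ℝ)^j * ((Nat.choose i a * Nat.choose (i-a) (j-a) : ℕ) : ℝ) := by rw [h1]
      _ = (Nat.choose i a : ℝ) * ((-1:ℝ)^j * (Nat.choose (i-a) (j-a) : ℝ)) := by push_cast; ring
  rw [Finset.sum_congr rfl hre, ← Finset.mul_sum]
  rw [Finset.sum_Ico_eq_sum_range]
  have : ∀ j ∈ range (i + 1 - a), (-1 : ℝ) ^ (a + j) * (Nat.choose (i - a) (a + j - a) : ℝ)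
      = (-1 : ℝ) ^ a * ((-1 : ℝ) ^ j * (Nat.choose (i - a) j : ℝ)) := by
    intro j hj
    rw [show a + j - a = j by omega, pow_add]; ring
  rw [Finset.sum_congr rfl this, ← Finset.mul_sum,
    show i + 1 - a = (i - a) + 1 by omega, alt_sum_choose]
  rcases eq_or_ne a i with h | h
  · subst h; simp
  · rw [if_neg (by omega), if_neg h]; ring

lemma kraw_moment (n i m : ℕ) (hi : i ≤ n) (hm : m ≤ i) :
    ∑ t ∈ range (n + 1), (Nat.choose t m : ℝ) * kraw n t i
      = if m = i then (-1 : ℝ) ^ i * 4 ^ (n - i) else 0 := by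
  unfold kraw
  -- step A: triangular reindex
  have stepA : ∑ t ∈ range (n + 1), (Nat.choose t m : ℝ) *
        (∑ j ∈ range (t + 1),
          (-1 : ℝ) ^ j * 3 ^ (t - j) * (Nat.choose i j : ℝ) * (Nat.choose (n - i) (t - j) : ℝ))
      = ∑ j ∈ range (n + 1), ∑ k ∈ range (n + 1 - j),
          (Nat.choose (j + k) m : ℝ) *
            ((-1 : ℝ) ^ j * 3 ^ k * (Nat.choose i j : ℝ) * (Nat.choose (n - i) k : ℝ)) := by
    rw [← tri_sum (n + 1) (fun j k => (Nat.choose (j + k) m : ℝ) *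
      ((-1 : ℝ) ^ j * 3 ^ k * (Nat.choose i j : ℝ) * (Nat.choose (n - i) k : ℝ)))]
    refine Finset.sum_congr rfl fun t ht => ?_
    rw [Finset.mul_sum]
    refine Finset.sum_congr rfl fun j hj => ?_
    have hjt : j ≤ t := by simp at hj; omega
    rw [show j + (t - j) = t by omega]
  rw [stepA]
  -- step B: extend inner range
  have stepB : ∀ j ∈ range (n + 1), ∑ k ∈ range (n + 1 - j),
        (Nat.choose (j + k) m : ℝ) *
          ((-1 : ℝ) ^ j * 3 ^ k * (Nat.choose i j : ℝ) * (Nat.choose (n - i) k : ℝ))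
      = ∑ k ∈ range (n + 1),
        (Nat.choose (j + k) m : ℝ) *
          ((-1 : ℝ) ^ j * 3 ^ k * (Nat.choose i j : ℝ) * (Nat.choose (n - i) k : ℝ)) := by
    intro j hj
    refine Finset.sum_subset (Finset.range_subset_range.2 (by omega)) fun k hk hk' => ?_
    simp only [Finset.mem_range] at hk hk'
    rcases le_or_gt j i with h | h
    · have : n - i < k := by omega
      simp [Nat.choose_eq_zero_of_lt this]
    · simp [Nat.choose_eq_zero_of_lt h]
  rw [Finset.sum_congr rfl stepB]
  -- step C: Vandermonde
  have vand : ∀ j k : ℕ, (Nat.choose (j + k) m : ℝ)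
      = ∑ a ∈ range (m + 1), (Nat.choose j a : ℝ) * (Nat.choose k (m - a) : ℝ) := by
    intro j k
    have h := Nat.add_choose_eq j k m
    rw [Finset.Nat.sum_antidiagonal_eq_sum_range_succ_mk] at h
    rw [h]; push_cast; rfl
  have expand : ∀ j k : ℕ,
      (Nat.choose (j + k) m : ℝ) *
        ((-1 : ℝ) ^ j * 3 ^ k * (Nat.choose i j : ℝ) * (Nat.choose (n - i) k : ℝ))
      = ∑ a ∈ range (m + 1),
          ((-1 : ℝ) ^ j * (Nat.choose i j : ℝ) * (Nat.choose j a : ℝ)) *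
          (3 ^ k * (Nat.choose (n - i) k : ℝ) * (Nat.choose k (m - a) : ℝ)) := by
    intro j k
    rw [vand, Finset.sum_mul]
    refine Finset.sum_congr rfl fun a _ => ?_
    ring
  rw [Finset.sum_congr rfl (fun j (_ : j ∈ range (n+1)) =>
    Finset.sum_congr rfl (fun k (_ : k ∈ range (n+1)) => expand j k))]
  rw [Finset.sum_congr rfl (fun j (_ : j ∈ range (n+1)) => Finset.sum_comm)]
  rw [Finset.sum_comm]
  have factored : ∀ a ∈ range (m + 1),
      (∑ j ∈ range (n + 1), ∑ k ∈ range (n + 1),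
        ((-1 : ℝ) ^ j * (Nat.choose i j : ℝ) * (Nat.choose j a : ℝ)) *
        (3 ^ k * (Nat.choose (n - i) k : ℝ) * (Nat.choose k (m - a) : ℝ)))
      = (if a = i then (-1 : ℝ) ^ i else 0) *
        (∑ k ∈ range (n + 1), 3 ^ k * (Nat.choose (n - i) k : ℝ) * (Nat.choose k (m - a) : ℝ)) := by
    intro a ha
    have haI : a ≤ i := by simp at ha; omega
    rw [← Finset.sum_mul_sum, alt_j_sum n i a hi haI]
  rw [Finset.sum_congr rfl factored]
  rcases Nat.lt_or_ge m i with hmi | hmi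
  · rw [if_neg (by omega)]
    refine Finset.sum_eq_zero fun a ha => ?_
    have : a ≠ i := by simp at ha; omega
    rw [if_neg this, zero_mul]
  · have hmi' : m = i := le_antisymm hm hmi
    subst hmi'
    rw [if_pos rfl]
    rw [Finset.sum_eq_single m]
    · rw [if_pos rfl]
      congr 1
      simp only [Nat.sub_self, Nat.choose_zero_right, Nat.cast_one, mul_one]
      have hvanish : ∀ k ∈ range (n + 1), k ∉ range (n - m + 1) →
          (3:ℝ) ^ k * (Nat.choose (n - m) k : ℝ) = 0 := by
        intro k hk hk'
        have : n - m < k := by simp at hk hk'; omega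
        simp [Nat.choose_eq_zero_of_lt this]
      rw [← Finset.sum_subset (Finset.range_subset_range.2 (by omega)) hvanish]
      have hb := add_pow (3:ℝ) 1 (n - m)
      simp only [one_pow, mul_one] at hb
      rw [show (3:ℝ) + 1 = 4 by norm_num] at hb
      exact hb.symm
    · intro a ha hne
      rw [if_neg (by omega), zero_mul]
    · intro h
      exact absurd (Finset.self_mem_range_succ m) h

-- Φ_i applied to descPochhammer
lemma phi_descPoch (n i m : ℕ) (hi : i ≤ n) (hm : m ≤ i) :
    ∑ t ∈ range (n + 1), (descPochhammer ℝ m).eval (t : ℝ) * kraw n t i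
      = (m.factorial : ℝ) * (if m = i then (-1 : ℝ) ^ i * 4 ^ (n - i) else 0) := by
  rw [← kraw_moment n i m hi hm, Finset.mul_sum]
  refine Finset.sum_congr rfl fun t _ => ?_
  rw [descPochhammer_eval_eq_descFactorial, Nat.descFactorial_eq_factorial_mul_choose]
  push_cast
  ring

lemma phi_poly (n i : ℕ) (hi : i ≤ n) :
    ∀ m, m < i → ∀ Q : Polynomial ℝ, Q.natDegree ≤ m →
      ∑ t ∈ range (n + 1), Q.eval (t : ℝ) * kraw n t i = 0 := by
  intro m
  induction m with
  | zero =>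
    intro him Q hQ
    obtain ⟨c, rfl⟩ := Polynomial.natDegree_eq_zero.mp (le_antisymm hQ (Nat.zero_le _))
    have h := kraw_moment n i 0 hi (by omega)
    rw [if_neg (by omega)] at h
    simp only [Polynomial.eval_C]
    calc ∑ t ∈ range (n + 1), c * kraw n t i
        = c * ∑ t ∈ range (n + 1), (Nat.choose t 0 : ℝ) * kraw n t i := by
          rw [Finset.mul_sum]; refine Finset.sum_congr rfl fun t _ => by simp
      _ = 0 := by rw [h, mul_zero]
  | succ m ih =>
    intro him Q hQ
    set c := Q.coeff (m + 1) with hc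
    set R := Q - Polynomial.C c * descPochhammer ℝ (m + 1) with hR
    have hRdeg : R.natDegree ≤ m := by
      refine Polynomial.natDegree_le_iff_coeff_eq_zero.mpr fun k hk => ?_
      rw [hR, Polynomial.coeff_sub, Polynomial.coeff_C_mul]
      rcases eq_or_lt_of_le (show m + 1 ≤ k by omega) with h | h
      · rw [← h]
        have : (descPochhammer ℝ (m + 1)).coeff (m + 1) = 1 := by
          have h := (monic_descPochhammer ℝ (m + 1)).coeff_natDegree
          rwa [descPochhammer_natDegree] at h
        rw [this, mul_one]; exact sub_self _
      · have h1 : Q.coeff k = 0 :=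
          Polynomial.coeff_eq_zero_of_natDegree_lt (lt_of_le_of_lt hQ h)
        have h2 : (descPochhammer ℝ (m + 1)).coeff k = 0 := by
          apply Polynomial.coeff_eq_zero_of_natDegree_lt
          rw [descPochhammer_natDegree]; exact h
        rw [h1, h2, mul_zero]; exact sub_self _
    have hQR : ∀ t : ℝ, Q.eval t = R.eval t + c * (descPochhammer ℝ (m + 1)).eval t := by
      intro t; rw [hR]; simp only [Polynomial.eval_sub, Polynomial.eval_mul, Polynomial.eval_C]; ring
    calc ∑ t ∈ range (n + 1), Q.eval (t : ℝ) * kraw n t i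
        = (∑ t ∈ range (n + 1), R.eval (t : ℝ) * kraw n t i)
          + c * ∑ t ∈ range (n + 1), (descPochhammer ℝ (m + 1)).eval (t : ℝ) * kraw n t i := by
          rw [Finset.mul_sum, ← Finset.sum_add_distrib]
          refine Finset.sum_congr rfl fun t _ => ?_
          rw [hQR]; ring
      _ = 0 := by
          rw [ih (by omega) R hRdeg, phi_descPoch n i (m + 1) hi (by omega),
            if_neg (by omega)]
          ring

lemma phi_top (n s : ℕ) (hs : s ≤ n) (Q : Polynomial ℝ) (hQ : Q.natDegree ≤ s) :
    ∑ t ∈ range (n + 1), Q.eval (t : ℝ) * kraw n t s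
      = Q.coeff s * (s.factorial : ℝ) * ((-1 : ℝ) ^ s * 4 ^ (n - s)) := by
  set c := Q.coeff s with hc
  set R := Q - Polynomial.C c * descPochhammer ℝ s with hR
  have hRcoeff : ∀ k, s ≤ k → R.coeff k = 0 := by
    intro k hk
    rw [hR, Polynomial.coeff_sub, Polynomial.coeff_C_mul]
    rcases eq_or_lt_of_le hk with h | h
    · rw [← h]
      have : (descPochhammer ℝ s).coeff s = 1 := by
        have h := (monic_descPochhammer ℝ s).coeff_natDegree
        rwa [descPochhammer_natDegree] at h
      rw [this, mul_one]; exact sub_self _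
    · have h1 : Q.coeff k = 0 :=
        Polynomial.coeff_eq_zero_of_natDegree_lt (lt_of_le_of_lt hQ h)
      have h2 : (descPochhammer ℝ s).coeff k = 0 := by
        apply Polynomial.coeff_eq_zero_of_natDegree_lt
        rw [descPochhammer_natDegree]; exact h
      rw [h1, h2, mul_zero]; exact sub_self _
  have hQR : ∀ t : ℝ, Q.eval t = R.eval t + c * (descPochhammer ℝ s).eval t := by
    intro t; rw [hR]; simp only [Polynomial.eval_sub, Polynomial.eval_mul, Polynomial.eval_C]; ring
  have hRzero : ∑ t ∈ range (n + 1), R.eval (t : ℝ) * kraw n t s = 0 := by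
    rcases Nat.eq_zero_or_pos s with h0 | hpos
    · have : R = 0 := by
        apply Polynomial.ext
        intro k
        rcases Nat.eq_zero_or_pos k with hk0 | hkpos
        · rw [hk0, Polynomial.coeff_zero]; exact hRcoeff 0 (by omega)
        · rw [Polynomial.coeff_zero]; exact hRcoeff k (by omega)
      simp [this]
    · have hRdeg : R.natDegree ≤ s - 1 :=
        Polynomial.natDegree_le_iff_coeff_eq_zero.mpr fun k hk => hRcoeff k (by omega)
      exact phi_poly n s hs (s - 1) (by omega) R hRdeg
  calc ∑ t ∈ range (n + 1), Q.eval (t : ℝ) * kraw n t s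
      = (∑ t ∈ range (n + 1), R.eval (t : ℝ) * kraw n t s)
        + c * ∑ t ∈ range (n + 1), (descPochhammer ℝ s).eval (t : ℝ) * kraw n t s := by
        rw [Finset.mul_sum, ← Finset.sum_add_distrib]
        refine Finset.sum_congr rfl fun t _ => ?_
        rw [hQR]; ring
    _ = Q.coeff s * (s.factorial : ℝ) * ((-1 : ℝ) ^ s * 4 ^ (n - s)) := by
        rw [hRzero, phi_descPoch n s s hs le_rfl, if_pos rfl, zero_add, ← hc]
        ring

noncomputable def Qpoly (n s : ℕ) : Polynomial ℝ :=
  ∑ j ∈ range (s + 1),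
    Polynomial.C ((-1 : ℝ) ^ j * 3 ^ (s - j) / (j.factorial * (s - j).factorial)) *
      (descPochhammer ℝ j * (descPochhammer ℝ (s - j)).comp (Polynomial.C (n : ℝ) - Polynomial.X))

lemma Qpoly_eval (n s t : ℕ) (ht : t ≤ n) : (Qpoly n s).eval (t : ℝ) = kraw n s t := by
  unfold Qpoly kraw
  rw [Polynomial.eval_finset_sum]
  refine Finset.sum_congr rfl fun j hj => ?_
  have hj' : j ≤ s := by simp at hj; omega
  rw [Polynomial.eval_mul, Polynomial.eval_mul, Polynomial.eval_C, Polynomial.eval_comp]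
  have harg : (Polynomial.C (n : ℝ) - Polynomial.X).eval (t : ℝ) = ((n - t : ℕ) : ℝ) := by
    simp [Nat.cast_sub ht]
  rw [harg, descPochhammer_eval_eq_descFactorial, descPochhammer_eval_eq_descFactorial,
    Nat.descFactorial_eq_factorial_mul_choose, Nat.descFactorial_eq_factorial_mul_choose]
  have h1 : (j.factorial : ℝ) ≠ 0 := Nat.cast_ne_zero.2 j.factorial_ne_zero
  have h2 : ((s - j).factorial : ℝ) ≠ 0 := Nat.cast_ne_zero.2 (s - j).factorial_ne_zero
  push_cast
  field_simp

lemma natDegree_linarg {n : ℕ} : (Polynomial.C ((n : ℕ) : ℝ) - Polynomial.X).natDegree = 1 := by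
  rw [show Polynomial.C ((n : ℕ) : ℝ) - Polynomial.X = -(Polynomial.X - Polynomial.C ((n : ℕ) : ℝ)) by ring,
    Polynomial.natDegree_neg, Polynomial.natDegree_X_sub_C]

lemma Qpoly_natDegree_le (n s : ℕ) : (Qpoly n s).natDegree ≤ s := by
  unfold Qpoly
  refine Polynomial.natDegree_sum_le_of_forall_le _ _ fun j hj => ?_
  have hj' : j ≤ s := by simp at hj; omega
  calc (Polynomial.C ((-1 : ℝ) ^ j * 3 ^ (s - j) / (j.factorial * (s - j).factorial)) *
        (descPochhammer ℝ j * (descPochhammer ℝ (s - j)).comp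
          (Polynomial.C (n : ℝ) - Polynomial.X))).natDegree
      ≤ (Polynomial.C ((-1 : ℝ) ^ j * 3 ^ (s - j) / (j.factorial * (s - j).factorial))).natDegree
        + (descPochhammer ℝ j * (descPochhammer ℝ (s - j)).comp
            (Polynomial.C (n : ℝ) - Polynomial.X)).natDegree := Polynomial.natDegree_mul_le
    _ ≤ 0 + ((descPochhammer ℝ j).natDegree +
          ((descPochhammer ℝ (s - j)).comp (Polynomial.C (n : ℝ) - Polynomial.X)).natDegree) := by
        gcongr
        · exact le_of_eq (Polynomial.natDegree_C _)
        · exact Polynomial.natDegree_mul_le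
    _ ≤ s := by
        have hcomp : ((descPochhammer ℝ (s - j)).comp
            (Polynomial.C (n : ℝ) - Polynomial.X)).natDegree ≤ s - j := by
          calc _ ≤ (descPochhammer ℝ (s - j)).natDegree *
                (Polynomial.C (n : ℝ) - Polynomial.X).natDegree := Polynomial.natDegree_comp_le
            _ ≤ s - j := by
                rw [descPochhammer_natDegree, natDegree_linarg]; omega
        have hdp : (descPochhammer ℝ j).natDegree = j := descPochhammer_natDegree (R := ℝ) j
        omega

lemma Qpoly_coeff_top (n s : ℕ) :
    (Qpoly n s).coeff s = (-1 : ℝ) ^ s * 4 ^ s / (s.factorial : ℝ) := by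
  unfold Qpoly
  rw [Polynomial.finset_sum_coeff]
  have hterm : ∀ j ∈ range (s + 1),
      (Polynomial.C ((-1 : ℝ) ^ j * 3 ^ (s - j) / (j.factorial * (s - j).factorial)) *
        (descPochhammer ℝ j * (descPochhammer ℝ (s - j)).comp
          (Polynomial.C (n : ℝ) - Polynomial.X))).coeff s
      = (-1 : ℝ) ^ s * 3 ^ (s - j) / (j.factorial * (s - j).factorial) := by
    intro j hj
    have hj' : j ≤ s := by simp at hj; omega
    rw [Polynomial.coeff_C_mul]
    have hdeg1 : (descPochhammer ℝ j).natDegree = j := descPochhammer_natDegree (R := ℝ) j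
    have hdeg2 : ((descPochhammer ℝ (s - j)).comp
        (Polynomial.C (n : ℝ) - Polynomial.X)).natDegree = s - j := by
      rw [Polynomial.natDegree_comp, descPochhammer_natDegree, natDegree_linarg, mul_one]
    have hlc2 : ((descPochhammer ℝ (s - j)).comp
        (Polynomial.C (n : ℝ) - Polynomial.X)).leadingCoeff = (-1 : ℝ) ^ (s - j) := by
      rw [Polynomial.leadingCoeff_comp (by rw [natDegree_linarg]; omega)]
      have hlc3 : (Polynomial.C ((n : ℕ) : ℝ) - Polynomial.X).leadingCoeff = -1 := by
        rw [show Polynomial.C ((n : ℕ) : ℝ) - Polynomial.X = -(Polynomial.X - Polynomial.C ((n : ℕ) : ℝ)) by ring,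
          Polynomial.leadingCoeff_neg, (Polynomial.monic_X_sub_C _).leadingCoeff]
      rw [hlc3, (monic_descPochhammer ℝ (s - j)).leadingCoeff, descPochhammer_natDegree, one_mul]
    have hmul : ((descPochhammer ℝ j) * (descPochhammer ℝ (s - j)).comp
        (Polynomial.C (n : ℝ) - Polynomial.X)).coeff s = (-1 : ℝ) ^ (s - j) := by
      have h := Polynomial.coeff_mul_degree_add_degree (descPochhammer ℝ j)
        ((descPochhammer ℝ (s - j)).comp (Polynomial.C (n : ℝ) - Polynomial.X))
      rw [hdeg1, hdeg2, show j + (s - j) = s by omega] at h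
      rw [h, (monic_descPochhammer ℝ j).leadingCoeff, one_mul, hlc2]
    rw [hmul]
    rw [show (-1 : ℝ) ^ j * 3 ^ (s - j) / (↑j.factorial * ↑(s - j).factorial) * (-1) ^ (s - j)
        = ((-1 : ℝ) ^ j * (-1) ^ (s - j)) * 3 ^ (s - j) / (↑j.factorial * ↑(s - j).factorial) by ring,
      ← pow_add, show j + (s - j) = s by omega]
  rw [Finset.sum_congr rfl hterm]
  have hfact : ∀ j ∈ range (s + 1),
      (-1 : ℝ) ^ s * 3 ^ (s - j) / (j.factorial * (s - j).factorial)
      = ((-1 : ℝ) ^ s / s.factorial) * ((s.choose j : ℝ) * 3 ^ (s - j)) := by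
    intro j hj
    have hj' : j ≤ s := by simp at hj; omega
    have key : (s.choose j * j.factorial * (s - j).factorial : ℕ) = s.factorial :=
      Nat.choose_mul_factorial_mul_factorial hj'
    have key' : ((s.choose j : ℝ)) * (j.factorial : ℝ) * ((s - j).factorial : ℝ)
        = (s.factorial : ℝ) := by exact_mod_cast congrArg (fun m : ℕ => (m : ℝ)) key
    have h1 : (j.factorial : ℝ) ≠ 0 := Nat.cast_ne_zero.2 j.factorial_ne_zero
    have h2 : ((s - j).factorial : ℝ) ≠ 0 := Nat.cast_ne_zero.2 (s - j).factorial_ne_zero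
    have h3 : (s.factorial : ℝ) ≠ 0 := Nat.cast_ne_zero.2 s.factorial_ne_zero
    field_simp
    linear_combination (-1 : ℝ) * key'
  rw [Finset.sum_congr rfl hfact, ← Finset.mul_sum]
  have hb : ∑ j ∈ range (s + 1), (s.choose j : ℝ) * 3 ^ (s - j) = 4 ^ s := by
    have h := add_pow (1 : ℝ) 3 s
    rw [show (1 : ℝ) + 3 = 4 by norm_num] at h
    rw [h]
    refine Finset.sum_congr rfl fun j _ => by ring
  rw [hb]
  ring

/-- The quantum Hamming bound: for `d = 2e+1`, under the normalized quantum enumerator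
conditions of a nondegenerate `((n,K,d))` quantum code,
`K ≤ 2^n / ∑_{i=0}^{e} 3^i C(n,i)`. -/
theorem stmt4 (n e : ℕ) (hn : 1 ≤ n) (d : ℕ) (hd : d = 2 * e + 1)
    (K : ℝ) (hK : 0 < K) (A B : ℕ → ℝ)
    (hA0 : A 0 = 1) (hB0 : B 0 = 1)
    (hAnonneg : ∀ i ≤ n, 0 ≤ A i) (hBnonneg : ∀ i ≤ n, 0 ≤ B i)
    (hAzero : ∀ i, 1 ≤ i → i ≤ d - 1 → A i = 0)
    (hBzero : ∀ i, 1 ≤ i → i ≤ d - 1 → B i = 0)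
    (hAB : ∀ t ≤ n, A t = (1 / (2 ^ n * K)) * ∑ i ∈ Finset.range (n + 1), B i * kraw n t i) :
    K ≤ 2 ^ n / ∑ i ∈ Finset.range (e + 1), 3 ^ i * (Nat.choose n i : ℝ) := by
  have hd1 : d - 1 = 2 * e := by omega
  set e' : ℕ := min e n with he'def
  have he'n : e' ≤ n := min_le_right e n
  have he'e : e' ≤ e := min_le_left e n
  set V' : ℝ := ∑ i ∈ range (e' + 1), 3 ^ i * (Nat.choose n i : ℝ) with hV'def
  have hVV' : ∑ i ∈ Finset.range (e + 1), 3 ^ i * (Nat.choose n i : ℝ) = V' := by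
    rw [hV'def]
    symm
    refine Finset.sum_subset (Finset.range_subset_range.2 (by omega)) fun i hi hi' => ?_
    have : n < i := by simp at hi hi'; omega
    simp [Nat.choose_eq_zero_of_lt this]
  set L : ℕ → ℝ := fun t => ∑ s ∈ range (e' + 1), kraw n s t with hLdef
  set QL : Polynomial ℝ := ∑ s ∈ range (e' + 1), Qpoly n s with hQLdef
  have hQLeval : ∀ t : ℕ, t ≤ n → QL.eval (t : ℝ) = L t := by
    intro t ht
    rw [hQLdef, Polynomial.eval_finset_sum, hLdef]
    exact Finset.sum_congr rfl fun s _ => Qpoly_eval n s t ht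
  have hQLdeg : QL.natDegree ≤ e' :=
    Polynomial.natDegree_sum_le_of_forall_le _ _ fun s hs =>
      le_trans (Qpoly_natDegree_le n s) (by simp at hs; omega)
  have hQL2deg : (QL ^ 2).natDegree ≤ 2 * e' := by
    calc (QL ^ 2).natDegree ≤ 2 * QL.natDegree := Polynomial.natDegree_pow_le
      _ ≤ 2 * e' := by omega
  set Γ : ℕ → ℝ := fun i => ∑ t ∈ range (n + 1), (L t) ^ 2 * kraw n t i with hΓdef
  -- vanishing of Γ for large i
  have hΓvanish : ∀ i, 2 * e' < i → i ≤ n → Γ i = 0 := by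
    intro i h1 h2
    have heq : Γ i = ∑ t ∈ range (n + 1), (QL ^ 2).eval (t : ℝ) * kraw n t i := by
      rw [hΓdef]
      refine Finset.sum_congr rfl fun t ht => ?_
      have ht' : t ≤ n := by simp at ht; omega
      rw [Polynomial.eval_pow, hQLeval t ht']
    rw [heq]
    exact phi_poly n i h2 (2 * e') h1 (QL ^ 2) hQL2deg
  -- value of Γ 0
  have hW : ∀ s ≤ n, ∀ s', s' ≤ s →
      (∑ t ∈ range (n + 1), kraw n s t * kraw n s' t * kraw n t 0)
        = if s' = s then 4 ^ n * (3 ^ s * (Nat.choose n s : ℝ)) else 0 := by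
    intro s hs s' hs's
    have hstep : ∀ t ∈ range (n + 1),
        kraw n s t * kraw n s' t * kraw n t 0
          = (3 ^ s * (Nat.choose n s : ℝ)) * ((Qpoly n s').eval (t : ℝ) * kraw n t s) := by
      intro t ht
      have ht' : t ≤ n := by simp at ht; omega
      rw [kraw_arg_zero]
      have hsym := kraw_symm n t s ht' hs
      rw [Qpoly_eval n s' t ht']
      linear_combination kraw n s' t * hsym
    rw [Finset.sum_congr rfl hstep, ← Finset.mul_sum]
    rcases eq_or_lt_of_le hs's with rfl | hlt
    · rw [if_pos rfl, phi_top n s' hs (Qpoly n s') (Qpoly_natDegree_le n s'), Qpoly_coeff_top]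
      have hfac : ((s'.factorial : ℝ)) ≠ 0 := Nat.cast_ne_zero.2 s'.factorial_ne_zero
      have hsgn : (-1 : ℝ) ^ s' * (-1 : ℝ) ^ s' = 1 := by
        rw [← pow_add]; exact Even.neg_one_pow ⟨s', by ring⟩
      have h4 : (4 : ℝ) ^ s' * 4 ^ (n - s') = 4 ^ n := by
        rw [← pow_add]; congr 1; omega
      field_simp
      linear_combination ((Nat.choose n s' : ℝ) * (4 ^ s' * 4 ^ (n - s'))) * hsgn
        + ((Nat.choose n s' : ℝ)) * h4
    · rw [if_neg (by omega),
        phi_poly n s hs s' hlt (Qpoly n s') (Qpoly_natDegree_le n s'), mul_zero]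
  have hΓ0 : Γ 0 = 4 ^ n * V' := by
    have hexp : ∀ t ∈ range (n + 1),
        (L t) ^ 2 * kraw n t 0
          = ∑ s ∈ range (e' + 1), ∑ s' ∈ range (e' + 1),
              kraw n s t * kraw n s' t * kraw n t 0 := by
      intro t _
      rw [hLdef, pow_two, Finset.sum_mul_sum, Finset.sum_mul]
      exact Finset.sum_congr rfl fun s _ => by rw [Finset.sum_mul]
    rw [hΓdef]
    simp only []
    rw [Finset.sum_congr rfl hexp, Finset.sum_comm]
    have hinner : ∀ s ∈ range (e' + 1),
        (∑ t ∈ range (n + 1), ∑ s' ∈ range (e' + 1),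
            kraw n s t * kraw n s' t * kraw n t 0)
        = 4 ^ n * (3 ^ s * (Nat.choose n s : ℝ)) := by
      intro s hs
      have hsn : s ≤ n := by simp at hs; omega
      rw [Finset.sum_comm]
      have hval : ∀ s' ∈ range (e' + 1),
          (∑ t ∈ range (n + 1), kraw n s t * kraw n s' t * kraw n t 0)
            = if s' = s then 4 ^ n * (3 ^ s * (Nat.choose n s : ℝ)) else 0 := by
        intro s' hs'
        have hs'n : s' ≤ n := by simp at hs'; omega
        rcases le_or_gt s' s with h | h
        · exact hW s hsn s' h
        · have hcomm : (∑ t ∈ range (n + 1), kraw n s t * kraw n s' t * kraw n t 0)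
              = ∑ t ∈ range (n + 1), kraw n s' t * kraw n s t * kraw n t 0 :=
            Finset.sum_congr rfl fun t _ => by ring
          rw [hcomm, hW s' hs'n s (le_of_lt h), if_neg (by omega), if_neg (by omega)]
      rw [Finset.sum_congr rfl hval, Finset.sum_ite_eq' (range (e' + 1)) s]
      rw [if_pos hs]
    rw [Finset.sum_congr rfl hinner, ← Finset.mul_sum, hV'def]
  -- the B-side sum
  have hBsum : ∑ i ∈ range (n + 1), B i * Γ i = 4 ^ n * V' := by
    rw [Finset.sum_eq_single_of_mem 0 (by simp)]
    · rw [hB0, one_mul, hΓ0]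
    · intro i hi hne
      have hi' : i ≤ n := by simp at hi; omega
      rcases le_or_gt i (2 * e') with h | h
      · have : B i = 0 := hBzero i (by omega) (by omega)
        rw [this, zero_mul]
      · rw [hΓvanish i h hi', mul_zero]
  -- the A-side sum
  have hT : ∑ t ∈ range (n + 1), A t * (L t) ^ 2
      = (1 / (2 ^ n * K)) * (4 ^ n * V') := by
    have hstep : ∀ t ∈ range (n + 1),
        A t * (L t) ^ 2 = (1 / (2 ^ n * K)) *
          ∑ i ∈ range (n + 1), B i * ((L t) ^ 2 * kraw n t i) := by
      intro t ht
      have ht' : t ≤ n := by simp at ht; omega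
      rw [hAB t ht', Finset.mul_sum, Finset.sum_mul, Finset.mul_sum]
      exact Finset.sum_congr rfl fun i _ => by ring
    rw [Finset.sum_congr rfl hstep, ← Finset.mul_sum, Finset.sum_comm]
    congr 1
    rw [← hBsum]
    refine Finset.sum_congr rfl fun i _ => ?_
    rw [hΓdef, Finset.mul_sum]
  -- lower bound
  have hL0 : L 0 = V' := by
    rw [hLdef, hV'def]
    exact Finset.sum_congr rfl fun s _ => kraw_arg_zero n s
  have hlow : V' ^ 2 ≤ ∑ t ∈ range (n + 1), A t * (L t) ^ 2 := by
    have h0mem : (0 : ℕ) ∈ range (n + 1) := by simp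
    have hnn : ∀ t ∈ range (n + 1), 0 ≤ A t * (L t) ^ 2 := fun t ht =>
      mul_nonneg (hAnonneg t (by simp at ht; omega)) (sq_nonneg _)
    have := Finset.single_le_sum hnn h0mem
    rw [hA0, one_mul, hL0] at this
    exact this
  have hV'pos : (0 : ℝ) < V' := by
    have h1 : (1 : ℝ) ≤ V' := by
      have h0mem : (0 : ℕ) ∈ range (e' + 1) := by simp
      have hnn : ∀ i ∈ range (e' + 1), (0 : ℝ) ≤ 3 ^ i * (Nat.choose n i : ℝ) := fun i _ =>
        mul_nonneg (by positivity) (Nat.cast_nonneg _)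
      have := Finset.single_le_sum hnn h0mem
      simpa [hV'def] using this
    linarith
  -- conclude
  have hP : (0 : ℝ) < 2 ^ n * K := by positivity
  have hmain : V' ^ 2 ≤ (1 / (2 ^ n * K)) * (4 ^ n * V') := hT ▸ hlow
  have h4n : (4 : ℝ) ^ n = 2 ^ n * 2 ^ n := by
    rw [show (4 : ℝ) = 2 * 2 by norm_num, mul_pow]
  have hKV : K * V' ≤ 2 ^ n := by
    have h1 : (2 ^ n * K) * V' ^ 2 ≤ 4 ^ n * V' := by
      have h2 := mul_le_mul_of_nonneg_left hmain (le_of_lt hP)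
      have h3 : (2 ^ n * K) * ((1 / (2 ^ n * K)) * (4 ^ n * V')) = 4 ^ n * V' := by
        field_simp
      linarith [h2, h3.le, h3.ge]
    have h2 : ((2 ^ n * K) * V') * V' ≤ (4 ^ n) * V' := by nlinarith [h1]
    have h3 : (2 ^ n * K) * V' ≤ 4 ^ n := le_of_mul_le_mul_right h2 hV'pos
    rw [h4n] at h3
    have h2npos : (0 : ℝ) < 2 ^ n := by positivity
    nlinarith [h3, h2npos]
  rw [hVV', le_div_iff₀ hV'pos]
  exact hKV
end

section
/- Let s, k, r ≥ 0 be integers with n = s + k + r, and let A_1 (s×k), A_2 (s×r), B_1 (s×s), B_2 (s×k), D_1 (r×s), D_2 (r×k) be matrices over F₂. Form the (n−k)×2n matrix G with block rows [I_s, A_1, A_2 | B_1, B_2, 0] and [0, 0, 0 | D_1, D_2, I_r], and the (n+k)×2n matrix G⊥ whose block rows are [I_s, A_1, A_2 | B_1, B_2, 0], [0, 0, 0 | D_1, D_2, I_r], [0, 0, 0 | A_1ᵀ, I_k, 0], and [0, I_k, D_2ᵀ | B_2ᵀ, 0, 0] (column blocks of sizes s, k, r, s, k, r). Then: (a) the n+k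 rows of G⊥ are F₂-linearly independent; (b) each of the 2k rows of the blocks [0, 0, 0 | A_1ᵀ, I_k, 0] and [0, I_k, D_2ᵀ | B_2ᵀ, 0, 0] is orthogonal, with respect to the symplectic inner product on F₂^{2n}, to every row of G; consequently, (c) if the F₂-row span 𝒞 of G satisfies 𝒞 ⊆ 𝒞⊥ (symplectic dual), then the rows of G⊥ span 𝒞⊥. -/
open Finset

/-- The symplectic inner product on `F₂^{2n}`, where vectors are indexed by `ι ⊕ ι`
(first copy = the `a`-part, second copy = the `b`-part):
`(a,b)•(a',b') = ⟨a,b'⟩ + ⟨a',b⟩`. -/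
def sympInner {ι : Type} [Fintype ι] (u v : (ι ⊕ ι) → ZMod 2) : ZMod 2 :=
  ∑ j : ι, (u (Sum.inl j) * v (Sum.inr j) + v (Sum.inl j) * u (Sum.inr j))

/-- The dual of a set of vectors with respect to the symplectic inner product. -/
def sympDual {ι : Type} [Fintype ι] (C : Set ((ι ⊕ ι) → ZMod 2)) :
    Set ((ι ⊕ ι) → ZMod 2) :=
  {v | ∀ u ∈ C, sympInner u v = 0}

/-- The rows of the matrix `G = [[I_s, A₁, A₂ | B₁, B₂, 0], [0, 0, 0 | D₁, D₂, I_r]]`,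
with column blocks of sizes `s, k, r, s, k, r`. -/
def gRow (s k r : ℕ)
    (A1 : Matrix (Fin s) (Fin k) (ZMod 2)) (A2 : Matrix (Fin s) (Fin r) (ZMod 2))
    (B1 : Matrix (Fin s) (Fin s) (ZMod 2)) (B2 : Matrix (Fin s) (Fin k) (ZMod 2))
    (D1 : Matrix (Fin r) (Fin s) (ZMod 2)) (D2 : Matrix (Fin r) (Fin k) (ZMod 2)) :
    (Fin s ⊕ Fin r) → ((Fin s ⊕ Fin k ⊕ Fin r) ⊕ (Fin s ⊕ Fin k ⊕ Fin r)) → ZMod 2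
  | Sum.inl i =>
      Sum.elim
        (Sum.elim (fun j => if j = i then 1 else 0)
          (Sum.elim (fun j => A1 i j) (fun j => A2 i j)))
        (Sum.elim (fun j => B1 i j)
          (Sum.elim (fun j => B2 i j) (fun _ => 0)))
  | Sum.inr i =>
      Sum.elim (fun _ => 0)
        (Sum.elim (fun j => D1 i j)
          (Sum.elim (fun j => D2 i j) (fun j => if j = i then 1 else 0)))

/-- The rows of the matrix
`G⊥ = [[I_s, A₁, A₂ | B₁, B₂, 0], [0, 0, 0 | D₁, D₂, I_r],
       [0, 0, 0 | A₁ᵀ, I_k, 0], [0, I_k, D₂ᵀ | B₂ᵀ, 0, 0]]`. -/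
def gPerpRow (s k r : ℕ)
    (A1 : Matrix (Fin s) (Fin k) (ZMod 2)) (A2 : Matrix (Fin s) (Fin r) (ZMod 2))
    (B1 : Matrix (Fin s) (Fin s) (ZMod 2)) (B2 : Matrix (Fin s) (Fin k) (ZMod 2))
    (D1 : Matrix (Fin r) (Fin s) (ZMod 2)) (D2 : Matrix (Fin r) (Fin k) (ZMod 2)) :
    ((Fin s ⊕ Fin r) ⊕ (Fin k ⊕ Fin k)) →
      ((Fin s ⊕ Fin k ⊕ Fin r) ⊕ (Fin s ⊕ Fin k ⊕ Fin r)) → ZMod 2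
  | Sum.inl i => gRow s k r A1 A2 B1 B2 D1 D2 i
  | Sum.inr (Sum.inl j) =>
      -- row [0, 0, 0 | A₁ᵀ, I_k, 0]
      Sum.elim (fun _ => 0)
        (Sum.elim (fun i => A1 i j)
          (Sum.elim (fun j' => if j' = j then 1 else 0) (fun _ => 0)))
  | Sum.inr (Sum.inr j) =>
      -- row [0, I_k, D₂ᵀ | B₂ᵀ, 0, 0]
      Sum.elim
        (Sum.elim (fun _ => 0)
          (Sum.elim (fun j' => if j' = j then 1 else 0) (fun i => D2 i j)))
        (Sum.elim (fun i => B2 i j)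
          (Sum.elim (fun _ => 0) (fun _ => 0)))

section Aux

lemma sympInner_comm {ι : Type} [Fintype ι] (u v : (ι ⊕ ι) → ZMod 2) :
    sympInner u v = sympInner v u := by
  unfold sympInner
  exact Finset.sum_congr rfl fun j _ => by ring

lemma sympInner_add_left {ι : Type} [Fintype ι] (u u' v : (ι ⊕ ι) → ZMod 2) :
    sympInner (u + u') v = sympInner u v + sympInner u' v := by
  unfold sympInner
  rw [← Finset.sum_add_distrib]
  exact Finset.sum_congr rfl fun j _ => by simp; ring

lemma sympInner_smul_left {ι : Type} [Fintype ι] (c : ZMod 2) (u v : (ι ⊕ ι) → ZMod 2) :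
    sympInner (c • u) v = c * sympInner u v := by
  unfold sympInner
  rw [Finset.mul_sum]
  exact Finset.sum_congr rfl fun j _ => by simp [smul_eq_mul]; ring

lemma sympInner_zero_left {ι : Type} [Fintype ι] (v : (ι ⊕ ι) → ZMod 2) :
    sympInner 0 v = 0 := by simp [sympInner]

/-- The linear map `v ↦ (m ↦ sympInner (g m) v)`. -/
def sympMap {ι κ : Type} [Fintype ι] (g : κ → ((ι ⊕ ι) → ZMod 2)) :
    ((ι ⊕ ι) → ZMod 2) →ₗ[ZMod 2] (κ → ZMod 2) where
  toFun v := fun m => sympInner (g m) v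
  map_add' v w := funext fun m => by
    show sympInner (g m) (v + w) = sympInner (g m) v + sympInner (g m) w
    rw [sympInner_comm, sympInner_add_left, sympInner_comm v, sympInner_comm w]
  map_smul' c v := funext fun m => by
    show sympInner (g m) (c • v) = c * sympInner (g m) v
    rw [sympInner_comm, sympInner_smul_left, sympInner_comm v]

lemma sympDual_span {ι κ : Type} [Fintype ι] (g : κ → ((ι ⊕ ι) → ZMod 2)) :
    sympDual (Submodule.span (ZMod 2) (Set.range g) : Set ((ι ⊕ ι) → ZMod 2))
      = (LinearMap.ker (sympMap g) : Set ((ι ⊕ ι) → ZMod 2)) := by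
  ext v
  constructor
  · intro hv
    simp only [SetLike.mem_coe, LinearMap.mem_ker]
    funext m
    exact hv (g m) (Submodule.subset_span ⟨m, rfl⟩)
  · intro hv u hu
    simp only [SetLike.mem_coe, LinearMap.mem_ker] at hv
    have key : ∀ m, sympInner (g m) v = 0 := fun m => congrFun hv m
    refine Submodule.span_induction ?_ ?_ ?_ ?_ hu
    · rintro _ ⟨m, rfl⟩; exact key m
    · exact sympInner_zero_left v
    · intro a b _ _ ha hb; rw [sympInner_add_left, ha, hb, add_zero]
    · intro c a _ ha; rw [sympInner_smul_left, ha, mul_zero]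
variable (s k r : ℕ)
    (A1 : Matrix (Fin s) (Fin k) (ZMod 2)) (A2 : Matrix (Fin s) (Fin r) (ZMod 2))
    (B1 : Matrix (Fin s) (Fin s) (ZMod 2)) (B2 : Matrix (Fin s) (Fin k) (ZMod 2))
    (D1 : Matrix (Fin r) (Fin s) (ZMod 2)) (D2 : Matrix (Fin r) (Fin k) (ZMod 2))

lemma partB : ∀ (j : Fin k ⊕ Fin k) (i : Fin s ⊕ Fin r),
    sympInner (gPerpRow s k r A1 A2 B1 B2 D1 D2 (Sum.inr j))
      (gRow s k r A1 A2 B1 B2 D1 D2 i) = 0 := by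
  rintro (j | j) (i | i) <;>
    simp [sympInner, gPerpRow, gRow, Fintype.sum_sum_type, ite_mul, mul_ite,
      Finset.sum_ite_eq, Finset.sum_ite_eq', CharTwo.add_self_eq_zero]

lemma surjL : Function.Surjective (sympMap (gRow s k r A1 A2 B1 B2 D1 D2)) := by
  intro t
  refine ⟨Sum.elim (Sum.elim (fun _ => 0) (Sum.elim (fun _ => 0) (fun j => t (Sum.inr j))))
    (Sum.elim (fun j => t (Sum.inl j)) (Sum.elim (fun _ => 0) (fun _ => 0))), ?_⟩
  funext m
  rcases m with i | i <;>
    simp [sympMap, sympInner, gRow, Fintype.sum_sum_type, ite_mul, mul_ite,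
      Finset.sum_ite_eq, Finset.sum_ite_eq']

lemma partA : LinearIndependent (ZMod 2) (gPerpRow s k r A1 A2 B1 B2 D1 D2) := by
  rw [Fintype.linearIndependent_iff]
  intro c hc
  have e : ∀ x, ∑ m, c m * gPerpRow s k r A1 A2 B1 B2 D1 D2 m x = 0 := by
    intro x
    have h := congrFun hc x
    simpa [Finset.sum_apply] using h
  have h1 : ∀ i : Fin s, c (Sum.inl (Sum.inl i)) = 0 := by
    intro i
    have := e (Sum.inl (Sum.inl i))
    simpa [gPerpRow, gRow, Fintype.sum_sum_type, mul_ite,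
      Finset.sum_ite_eq, Finset.sum_ite_eq'] using this
  have h2 : ∀ j : Fin k, c (Sum.inr (Sum.inr j)) = 0 := by
    intro j
    have := e (Sum.inl (Sum.inr (Sum.inl j)))
    simpa [gPerpRow, gRow, Fintype.sum_sum_type, mul_ite,
      Finset.sum_ite_eq, Finset.sum_ite_eq', h1] using this
  have h3 : ∀ i : Fin r, c (Sum.inl (Sum.inr i)) = 0 := by
    intro i
    have := e (Sum.inr (Sum.inr (Sum.inr i)))
    simpa [gPerpRow, gRow, Fintype.sum_sum_type, mul_ite,
      Finset.sum_ite_eq, Finset.sum_ite_eq', h1, h2] using this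
  have h4 : ∀ j : Fin k, c (Sum.inr (Sum.inl j)) = 0 := by
    intro j
    have := e (Sum.inr (Sum.inr (Sum.inl j)))
    simpa [gPerpRow, gRow, Fintype.sum_sum_type, mul_ite,
      Finset.sum_ite_eq, Finset.sum_ite_eq', h1, h3] using this
  rintro ((i | i) | (j | j))
  exacts [h1 i, h3 i, h4 j, h2 j]

lemma partC
    (h : ((Submodule.span (ZMod 2) (Set.range (gRow s k r A1 A2 B1 B2 D1 D2)) :
          Set (((Fin s ⊕ Fin k ⊕ Fin r) ⊕ (Fin s ⊕ Fin k ⊕ Fin r)) → ZMod 2))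
        ⊆ sympDual (Submodule.span (ZMod 2) (Set.range (gRow s k r A1 A2 B1 B2 D1 D2)) :
          Set (((Fin s ⊕ Fin k ⊕ Fin r) ⊕ (Fin s ⊕ Fin k ⊕ Fin r)) → ZMod 2)))) :
    (Submodule.span (ZMod 2) (Set.range (gPerpRow s k r A1 A2 B1 B2 D1 D2)) :
          Set (((Fin s ⊕ Fin k ⊕ Fin r) ⊕ (Fin s ⊕ Fin k ⊕ Fin r)) → ZMod 2))
        = sympDual
            (Submodule.span (ZMod 2) (Set.range (gRow s k r A1 A2 B1 B2 D1 D2)) :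
          Set (((Fin s ⊕ Fin k ⊕ Fin r) ⊕ (Fin s ⊕ Fin k ⊕ Fin r)) → ZMod 2)) := by
  set g := gRow s k r A1 A2 B1 B2 D1 D2 with hg
  set gp := gPerpRow s k r A1 A2 B1 B2 D1 D2 with hgp
  rw [sympDual_span] at h ⊢
  suffices hs : Submodule.span (ZMod 2) (Set.range gp) = LinearMap.ker (sympMap g) by
    rw [hs]
  have hle : Submodule.span (ZMod 2) (Set.range gp) ≤ LinearMap.ker (sympMap g) := by
    rw [Submodule.span_le]
    rintro _ ⟨m, rfl⟩
    rcases m with m | j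
    · have : g m ∈ (Submodule.span (ZMod 2) (Set.range g) :
          Set (((Fin s ⊕ Fin k ⊕ Fin r) ⊕ (Fin s ⊕ Fin k ⊕ Fin r)) → ZMod 2)) :=
        Submodule.subset_span ⟨m, rfl⟩
      exact h this
    · rw [SetLike.mem_coe, LinearMap.mem_ker]
      funext i
      show sympInner (g i) (gp (Sum.inr j)) = 0
      rw [sympInner_comm]
      exact partB s k r A1 A2 B1 B2 D1 D2 j i
  have hcard : Module.finrank (ZMod 2)
      (Submodule.span (ZMod 2) (Set.range gp)) = (s + r) + (k + k) := by
    rw [finrank_span_eq_card (partA s k r A1 A2 B1 B2 D1 D2)]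
    simp
  have hker : Module.finrank (ZMod 2) (LinearMap.ker (sympMap g)) = (s + r) + (k + k) := by
    have hrk := LinearMap.finrank_range_add_finrank_ker (sympMap g)
    have htop : LinearMap.range (sympMap g) = ⊤ :=
      LinearMap.range_eq_top.mpr (surjL s k r A1 A2 B1 B2 D1 D2)
    rw [htop, finrank_top] at hrk
    simp [Module.finrank_fintype_fun_eq_card] at hrk
    omega
  exact Submodule.eq_of_le_of_finrank_eq hle (by rw [hcard, hker])

end Aux

/-- (a) The `n+k` rows of `G⊥` are `F₂`-linearly independent; (b) each of the `2k` extra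
rows of `G⊥` is symplectically orthogonal to every row of `G`; (c) if the row span `𝒞` of
`G` satisfies `𝒞 ⊆ 𝒞⊥`, then the rows of `G⊥` span `𝒞⊥`. -/
theorem stmt5 (s k r : ℕ)
    (A1 : Matrix (Fin s) (Fin k) (ZMod 2)) (A2 : Matrix (Fin s) (Fin r) (ZMod 2))
    (B1 : Matrix (Fin s) (Fin s) (ZMod 2)) (B2 : Matrix (Fin s) (Fin k) (ZMod 2))
    (D1 : Matrix (Fin r) (Fin s) (ZMod 2)) (D2 : Matrix (Fin r) (Fin k) (ZMod 2)) :
    LinearIndependent (ZMod 2) (gPerpRow s k r A1 A2 B1 B2 D1 D2) ∧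
    (∀ (j : Fin k ⊕ Fin k) (i : Fin s ⊕ Fin r),
      sympInner (gPerpRow s k r A1 A2 B1 B2 D1 D2 (Sum.inr j))
        (gRow s k r A1 A2 B1 B2 D1 D2 i) = 0) ∧
    (((Submodule.span (ZMod 2) (Set.range (gRow s k r A1 A2 B1 B2 D1 D2)) :
          Set (((Fin s ⊕ Fin k ⊕ Fin r) ⊕ (Fin s ⊕ Fin k ⊕ Fin r)) → ZMod 2))
        ⊆ sympDual (Submodule.span (ZMod 2) (Set.range (gRow s k r A1 A2 B1 B2 D1 D2)) :
          Set (((Fin s ⊕ Fin k ⊕ Fin r) ⊕ (Fin s ⊕ Fin k ⊕ Fin r)) → ZMod 2))) →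
      (Submodule.span (ZMod 2) (Set.range (gPerpRow s k r A1 A2 B1 B2 D1 D2)) :
          Set (((Fin s ⊕ Fin k ⊕ Fin r) ⊕ (Fin s ⊕ Fin k ⊕ Fin r)) → ZMod 2))
        = sympDual
            (Submodule.span (ZMod 2) (Set.range (gRow s k r A1 A2 B1 B2 D1 D2)) :
          Set (((Fin s ⊕ Fin k ⊕ Fin r) ⊕ (Fin s ⊕ Fin k ⊕ Fin r)) → ZMod 2))) := by
  exact ⟨partA s k r A1 A2 B1 B2 D1 D2, partB s k r A1 A2 B1 B2 D1 D2,
    partC s k r A1 A2 B1 B2 D1 D2⟩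
end

section
/- Let C ⊆ GF(4)^n be an additive code of type 4^{k_0}2^{k_1} with coordinates arranged in standard form, and suppose C ⊆ C⊥ (trace-Hermitian dual). Then there exists an F₂-linear complement S of C in C⊥ (i.e., C ∩ S = {0} and C + S = C⊥, so |S| = 2^{2n−4k_0−2k_1}) such that every codeword of S is zero on the first k_0 coordinates and takes values in {0, ω} on each of the coordinates k_0+1, …, k_0+k_1. -/
open Finset

/-- The field `GF(4)`. -/
abbrev F4 := GaloisField 2 2

/-- The Hamming weight of a vector: the number of nonzero coordinates. -/
noncomputable def hWt {ι : Type} [Fintype ι] {F : Type} [Zero F] (v : ι → F) : ℕ :=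
  Nat.card {i : ι // v i ≠ 0}

/-- The trace-Hermitian inner product on `GF(4)^n`:
`u*v = ∑ᵢ (uᵢ vᵢ² + uᵢ² vᵢ)`. -/
noncomputable def trInner {ι : Type} [Fintype ι] (u v : ι → F4) : F4 :=
  ∑ i, (u i * (v i) ^ 2 + (u i) ^ 2 * v i)

/-- The dual of a set of vectors in `GF(4)^n` with respect to the trace-Hermitian
inner product. -/
noncomputable def trDual {ι : Type} [Fintype ι] (C : Set (ι → F4)) : Set (ι → F4) :=
  {v | ∀ u ∈ C, trInner v u = 0}

/-- The rows of the standard-form generator matrix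
`[[I_{k₀}, ωA₁, B₁], [ωI_{k₀}, ωA₂, B₂], [0, I_{k₁}, A₃]]` of an additive code of
type `4^{k₀}2^{k₁}` and length `n = k₀ + k₁ + m`, with column blocks of sizes
`k₀, k₁, m`. -/
noncomputable def stdRow (k0 k1 m : ℕ) (ω : F4)
    (A1 A2 : Matrix (Fin k0) (Fin k1) F4) (A3 : Matrix (Fin k1) (Fin m) F4)
    (B1 B2 : Matrix (Fin k0) (Fin m) F4) :
    (Fin k0 ⊕ Fin k0 ⊕ Fin k1) → (Fin k0 ⊕ Fin k1 ⊕ Fin m) → F4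
  | Sum.inl i =>
      Sum.elim (fun j => if j = i then 1 else 0)
        (Sum.elim (fun j => ω * A1 i j) (fun j => B1 i j))
  | Sum.inr (Sum.inl i) =>
      Sum.elim (fun j => if j = i then ω else 0)
        (Sum.elim (fun j => ω * A2 i j) (fun j => B2 i j))
  | Sum.inr (Sum.inr i) =>
      Sum.elim (fun _ => 0)
        (Sum.elim (fun j => if j = i then 1 else 0) (fun j => A3 i j))

/-! ### Auxiliary lemmas -/

lemma zmod2_cases (a : ZMod 2) : a = 0 ∨ a = 1 := by revert a; decide

lemma F4_add_self (x : F4) : x + x = 0 := CharTwo.add_self_eq_zero x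

lemma omne (ω : F4) (hω : orderOf ω = 3) : ω ≠ 0 ∧ ω ≠ 1 := by
  constructor
  · rintro rfl
    have := pow_orderOf_eq_one (0 : F4)
    rw [hω] at this; simp at this
  · rintro rfl; simp at hω

lemma liOm (ω : F4) (hω : orderOf ω = 3) : LinearIndependent (ZMod 2) ![(1 : F4), ω] := by
  obtain ⟨h0, h1⟩ := omne ω hω
  rw [linearIndependent_fin2]
  refine ⟨by simpa using h0, fun a => ?_⟩
  rcases zmod2_cases a with rfl | rfl
  · simp
  · simpa using h1

noncomputable def bOm (ω : F4) (hω : orderOf ω = 3) : Module.Basis (Fin 2) (ZMod 2) F4 :=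
  basisOfLinearIndependentOfCardEqFinrank (liOm ω hω)
    (by simp [GaloisField.finrank 2 (by norm_num : 2 ≠ 0)])

lemma bOm_apply0 (ω : F4) (hω : orderOf ω = 3) : bOm ω hω 0 = 1 := by
  rw [bOm, coe_basisOfLinearIndependentOfCardEqFinrank]; rfl
lemma bOm_apply1 (ω : F4) (hω : orderOf ω = 3) : bOm ω hω 1 = ω := by
  rw [bOm, coe_basisOfLinearIndependentOfCardEqFinrank]; rfl

lemma repr_decomp (ω : F4) (hω : orderOf ω = 3) (x : F4) :
    x = ((bOm ω hω).repr x 0) • (1 : F4) + ((bOm ω hω).repr x 1) • ω := by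
  conv_lhs => rw [← (bOm ω hω).sum_repr x]
  rw [Fin.sum_univ_two, bOm_apply0, bOm_apply1]

lemma repr0_zero (ω : F4) (hω : orderOf ω = 3) (x : F4) (h : (bOm ω hω).repr x 0 = 0) :
    x = 0 ∨ x = ω := by
  have := repr_decomp ω hω x
  rw [h, zero_smul, zero_add] at this
  rcases zmod2_cases ((bOm ω hω).repr x 1) with h1 | h1 <;> rw [h1] at this
  · left; simpa using this
  · right; simpa using this

lemma repr_one0 (ω : F4) (hω : orderOf ω = 3) : (bOm ω hω).repr 1 0 = 1 := by
  have : (bOm ω hω).repr (bOm ω hω 0) 0 = 1 := by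
    rw [Module.Basis.repr_self]; simp
  rwa [bOm_apply0] at this

lemma F4pow4 (x : F4) : x ^ 4 = x := by
  cases nonempty_fintype F4
  have h := FiniteField.pow_card x
  have hc : Fintype.card F4 = 4 := by
    rw [← Nat.card_eq_fintype_card, GaloisField.card 2 2 (by norm_num)]; norm_num
  rwa [hc] at h

lemma trInner_sq {ι : Type} [Fintype ι] (u v : ι → F4) :
    (trInner u v) ^ 2 = trInner u v := by
  show (∑ i, (u i * (v i) ^ 2 + (u i) ^ 2 * v i)) ^ 2 = _
  rw [sum_pow_char]
  refine Finset.sum_congr rfl fun i _ => ?_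
  have h4 : ∀ x : F4, x ^ 4 = x := F4pow4
  rw [add_pow_char]
  ring_nf
  rw [show (u i) ^ 4 = u i from h4 _, show (v i) ^ 4 = v i from h4 _]
  ring

lemma trInner_zero_or_one {ι : Type} [Fintype ι] (u v : ι → F4) :
    trInner u v = 0 ∨ trInner u v = 1 := by
  have h := trInner_sq u v
  have : trInner u v * (trInner u v - 1) = 0 := by
    ring_nf
    rw [show trInner u v ^ 2 = trInner u v from h]; ring
  rcases mul_eq_zero.mp this with h' | h'
  · exact Or.inl h'
  · exact Or.inr (sub_eq_zero.mp h')

noncomputable def piOm (ω : F4) (hω : orderOf ω = 3) : F4 →ₗ[ZMod 2] ZMod 2 :=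
  (bOm ω hω).coord 0

lemma piOm_one (ω : F4) (hω : orderOf ω = 3) : piOm ω hω 1 = 1 := by
  have : piOm ω hω (bOm ω hω 0) = 1 := by
    simp [piOm, Module.Basis.coord_apply, Module.Basis.repr_self]
  rwa [bOm_apply0] at this

lemma piOm_eq_zero_iff (ω : F4) (hω : orderOf ω = 3) {t : F4} (ht : t = 0 ∨ t = 1) :
    piOm ω hω t = 0 ↔ t = 0 := by
  rcases ht with rfl | rfl
  · simp
  · simp [piOm_one ω hω]

lemma trInner_comm {ι : Type} [Fintype ι] (u v : ι → F4) : trInner u v = trInner v u := by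
  unfold trInner; exact Finset.sum_congr rfl fun i _ => by ring

lemma trInner_add_left {ι : Type} [Fintype ι] (u u' v : ι → F4) :
    trInner (u + u') v = trInner u v + trInner u' v := by
  unfold trInner
  rw [← Finset.sum_add_distrib]
  refine Finset.sum_congr rfl fun i _ => ?_
  have : (u i + u' i) ^ 2 = u i ^ 2 + u' i ^ 2 := add_pow_char ..
  simp only [Pi.add_apply, this]
  ring

lemma trInner_smul_left {ι : Type} [Fintype ι] (a : ZMod 2) (u v : ι → F4) :
    trInner (a • u) v = a • trInner u v := by
  rcases zmod2_cases a with rfl | rfl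
  · simp only [zero_smul]
    unfold trInner
    simp
  · simp

/-- the trace-Hermitian form as an `F₂`-valued bilinear form -/
noncomputable def BF (ω : F4) (hω : orderOf ω = 3) {ι : Type} [Fintype ι] :
    LinearMap.BilinForm (ZMod 2) (ι → F4) :=
  LinearMap.mk₂ (ZMod 2) (fun u v => piOm ω hω (trInner u v))
    (fun u u' v => show piOm ω hω (trInner (u + u') v) = _ by
      rw [trInner_add_left, map_add])
    (fun a u v => show piOm ω hω (trInner (a • u) v) = _ by
      rw [trInner_smul_left, map_smul])
    (fun u v v' => show piOm ω hω (trInner u (v + v')) = _ by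
      rw [trInner_comm, trInner_add_left, map_add, trInner_comm v u, trInner_comm v' u])
    (fun a u v => show piOm ω hω (trInner u (a • v)) = _ by
      rw [trInner_comm, trInner_smul_left, map_smul, trInner_comm v u])

lemma BF_apply (ω : F4) (hω : orderOf ω = 3) {ι : Type} [Fintype ι] (u v : ι → F4) :
    BF ω hω u v = piOm ω hω (trInner u v) := rfl

lemma BF_eq_zero_iff (ω : F4) (hω : orderOf ω = 3) {ι : Type} [Fintype ι] (u v : ι → F4) :
    BF ω hω u v = 0 ↔ trInner u v = 0 := by
  rw [BF_apply, piOm_eq_zero_iff ω hω (trInner_zero_or_one u v)]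

lemma omsq (ω : F4) (hω : orderOf ω = 3) : ω ^ 2 + ω = 1 := by
  obtain ⟨h0, h1⟩ := omne ω hω
  have h3 : ω ^ 3 = 1 := by rw [← hω]; exact pow_orderOf_eq_one ω
  have key : (ω - 1) * (ω ^ 2 + ω + 1) = 0 := by ring_nf; rw [h3]; ring
  rcases mul_eq_zero.mp key with h | h
  · exact absurd (sub_eq_zero.mp h) h1
  · have h2 : (1 : F4) + 1 = 0 := F4_add_self 1
    linear_combination h - h2

lemma trInner_single {ι : Type} [Fintype ι] [DecidableEq ι] (v : ι → F4) (i : ι) (x : F4) :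
    trInner v (Pi.single i x) = v i * x ^ 2 + (v i) ^ 2 * x := by
  unfold trInner
  rw [Finset.sum_eq_single_of_mem i (Finset.mem_univ i)]
  · simp
  · intro j _ hj
    simp [Pi.single_apply, hj]

lemma BF_nondegenerate (ω : F4) (hω : orderOf ω = 3) {ι : Type} [Fintype ι] [DecidableEq ι] :
    (BF ω hω (ι := ι)).Nondegenerate := by
  refine (LinearMap.IsRefl.nondegenerate_iff_separatingLeft
    (fun u v h => by rw [BF_apply, trInner_comm]; exact h)).mpr ?_
  intro v hv
  obtain ⟨h0, h1⟩ := omne ω hω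
  funext i
  by_contra hi
  simp only [Pi.zero_apply] at hi
  set x : F4 := (ω * (v i)⁻¹) ^ 2 with hx
  have hform := hv (Pi.single i x)
  rw [BF_apply, trInner_single] at hform
  have hx2 : x ^ 2 = ω * (v i)⁻¹ := by
    rw [hx, ← pow_mul]
    exact F4pow4 _
  have hval : v i * x ^ 2 + (v i) ^ 2 * x = 1 := by
    rw [hx2, hx]
    field_simp
    ring_nf
    linear_combination omsq ω hω
  rw [hval, piOm_one ω hω] at hform
  exact one_ne_zero hform

lemma BF_isRefl (ω : F4) (hω : orderOf ω = 3) {ι : Type} [Fintype ι] :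
    (BF ω hω (ι := ι)).IsRefl := by
  intro u v h
  rw [BF_apply, trInner_comm]
  exact h

lemma sum_ite_smul {k : ℕ} (f : Fin k → ZMod 2) (x : F4) (j : Fin k) :
    ∑ i, f i • (if j = i then x else (0:F4)) = f j • x := by
  rw [Finset.sum_eq_single_of_mem j (Finset.mem_univ j)]
  · simp
  · intro i _ hij
    rw [if_neg (Ne.symm hij), smul_zero]

section coords
variable (k0 k1 m : ℕ) (ω : F4)
    (A1 A2 : Matrix (Fin k0) (Fin k1) F4) (A3 : Matrix (Fin k1) (Fin m) F4)
    (B1 B2 : Matrix (Fin k0) (Fin m) F4)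

lemma rowSum_inl (c : (Fin k0 ⊕ Fin k0 ⊕ Fin k1) → ZMod 2) (j : Fin k0) :
    (∑ r, c r • stdRow k0 k1 m ω A1 A2 A3 B1 B2 r) (Sum.inl j)
      = c (Sum.inl j) • (1:F4) + c (Sum.inr (Sum.inl j)) • ω := by
  rw [Finset.sum_apply]
  simp only [Pi.smul_apply]
  rw [Fintype.sum_sum_type, Fintype.sum_sum_type]
  simp only [stdRow, Sum.elim_inl]
  rw [sum_ite_smul, sum_ite_smul]
  simp

lemma rowSum_inrinl (c : (Fin k0 ⊕ Fin k0 ⊕ Fin k1) → ZMod 2) (i : Fin k1) :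
    (∑ r, c r • stdRow k0 k1 m ω A1 A2 A3 B1 B2 r) (Sum.inr (Sum.inl i))
      = (∑ j, c (Sum.inl j) • (ω * A1 j i)) + ((∑ j, c (Sum.inr (Sum.inl j)) • (ω * A2 j i))
        + c (Sum.inr (Sum.inr i)) • (1:F4)) := by
  rw [Finset.sum_apply]
  simp only [Pi.smul_apply]
  rw [Fintype.sum_sum_type, Fintype.sum_sum_type]
  simp only [stdRow, Sum.elim_inl, Sum.elim_inr]
  rw [sum_ite_smul]

end coords

/-- For a self-orthogonal additive code `C` of type `4^{k₀}2^{k₁}` in standard form,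
there is an `F₂`-linear complement `S` of `C` in `C⊥` (so `|S| = 2^{2n−4k₀−2k₁}`)
whose codewords vanish on the first `k₀` coordinates and take values in `{0, ω}` on the
next `k₁` coordinates. -/
theorem stmt8 (k0 k1 m : ℕ) (ω : F4)
    (A1 A2 : Matrix (Fin k0) (Fin k1) F4) (A3 : Matrix (Fin k1) (Fin m) F4)
    (B1 B2 : Matrix (Fin k0) (Fin m) F4)
    (hω : orderOf ω = 3)
    (hB1 : ∀ i j, B1 i j = 0 ∨ B1 i j = 1) (hB2 : ∀ i j, B2 i j = 0 ∨ B2 i j = 1)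
    (hli : LinearIndependent (ZMod 2) (stdRow k0 k1 m ω A1 A2 A3 B1 B2))
    (C : Submodule (ZMod 2) ((Fin k0 ⊕ Fin k1 ⊕ Fin m) → F4))
    (hC : C = Submodule.span (ZMod 2) (Set.range (stdRow k0 k1 m ω A1 A2 A3 B1 B2)))
    (hself : (C : Set ((Fin k0 ⊕ Fin k1 ⊕ Fin m) → F4)) ⊆ trDual (C : Set ((Fin k0 ⊕ Fin k1 ⊕ Fin m) → F4))) :
    ∃ S : Submodule (ZMod 2) ((Fin k0 ⊕ Fin k1 ⊕ Fin m) → F4),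
      C ⊓ S = ⊥ ∧
      ((C ⊔ S : Submodule (ZMod 2) ((Fin k0 ⊕ Fin k1 ⊕ Fin m) → F4)) : Set ((Fin k0 ⊕ Fin k1 ⊕ Fin m) → F4))
        = trDual (C : Set ((Fin k0 ⊕ Fin k1 ⊕ Fin m) → F4)) ∧
      Nat.card S = 2 ^ (2 * (k0 + k1 + m) - 4 * k0 - 2 * k1) ∧
      ∀ v ∈ S, (∀ j : Fin k0, v (Sum.inl j) = 0) ∧
        (∀ j : Fin k1, v (Sum.inr (Sum.inl j)) = 0 ∨ v (Sum.inr (Sum.inl j)) = ω) := by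
  classical
  obtain ⟨hω0, hω1⟩ := omne ω hω
  let ι' := (Fin k0 ⊕ Fin k1 ⊕ Fin m)
  set B := BF ω hω (ι := ι') with hB
  set D := B.orthogonal C with hD
  -- the dual as a submodule
  have hDset : (D : Set (ι' → F4)) = trDual (C : Set (ι' → F4)) := by
    ext v
    simp only [SetLike.mem_coe, hD, LinearMap.BilinForm.mem_orthogonal_iff]
    constructor
    · intro h u hu
      rw [trInner_comm]
      exact (BF_eq_zero_iff ω hω u v).mp (h u hu)
    · intro h u hu
      exact (BF_eq_zero_iff ω hω u v).mpr (by rw [trInner_comm]; exact h u hu)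
  have hCD : C ≤ D := by
    intro v hv
    have h1 : v ∈ trDual (C : Set (ι' → F4)) := hself (show v ∈ (C : Set (ι' → F4)) from hv)
    have h2 : v ∈ (D : Set (ι' → F4)) := hDset ▸ h1
    exact h2
  -- the auxiliary submodule T
  let T : Submodule (ZMod 2) (ι' → F4) :=
    { carrier := {v | (∀ j : Fin k0, v (Sum.inl j) = 0) ∧
        (∀ i : Fin k1, v (Sum.inr (Sum.inl i)) = 0 ∨ v (Sum.inr (Sum.inl i)) = ω)}
      add_mem' := by
        rintro x y ⟨hx1, hx2⟩ ⟨hy1, hy2⟩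
        refine ⟨fun j => by simp [hx1 j, hy1 j], fun i => ?_⟩
        rcases hx2 i with h1 | h1 <;> rcases hy2 i with h2 | h2 <;>
          simp [Pi.add_apply, h1, h2, F4_add_self]
      zero_mem' := by exact ⟨fun j => rfl, fun i => Or.inl rfl⟩
      smul_mem' := by
        intro a x ⟨hx1, hx2⟩
        rcases zmod2_cases a with rfl | rfl
        · exact ⟨fun j => by simp, fun i => Or.inl (by simp)⟩
        · exact ⟨fun j => by simpa using hx1 j, fun i => by simpa using hx2 i⟩ }
  have memT : ∀ v : ι' → F4, v ∈ T ↔ ((∀ j : Fin k0, v (Sum.inl j) = 0) ∧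
      (∀ i : Fin k1, v (Sum.inr (Sum.inl i)) = 0 ∨ v (Sum.inr (Sum.inl i)) = ω)) :=
    fun v => Iff.rfl
  -- C ∩ T = 0
  have hCT : ∀ v, v ∈ C → v ∈ T → v = 0 := by
    intro v hvC hvT
    rw [hC, Submodule.mem_span_range_iff_exists_fun] at hvC
    obtain ⟨c, hc⟩ := hvC
    obtain ⟨hT1, hT2⟩ := (memT v).mp hvT
    have h12 : ∀ j : Fin k0, c (Sum.inl j) = 0 ∧ c (Sum.inr (Sum.inl j)) = 0 := by
      intro j
      have h := rowSum_inl k0 k1 m ω A1 A2 A3 B1 B2 c j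
      rw [hc, hT1 j] at h
      rcases zmod2_cases (c (Sum.inl j)) with h1 | h1 <;>
        rcases zmod2_cases (c (Sum.inr (Sum.inl j))) with h2 | h2
      · exact ⟨h1, h2⟩
      · rw [h1, h2, zero_smul, one_smul, zero_add] at h
        exact absurd h.symm hω0
      · rw [h1, h2, zero_smul, one_smul, add_zero] at h
        exact absurd h.symm one_ne_zero
      · rw [h1, h2, one_smul, one_smul] at h
        have : ω = 1 := by linear_combination -h - F4_add_self 1
        exact absurd this hω1
    have h3 : ∀ i : Fin k1, c (Sum.inr (Sum.inr i)) = 0 := by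
      intro i
      have h := rowSum_inrinl k0 k1 m ω A1 A2 A3 B1 B2 c i
      rw [hc] at h
      have hz1 : (∑ j, c (Sum.inl j) • (ω * A1 j i)) = 0 :=
        Finset.sum_eq_zero fun j _ => by rw [(h12 j).1, zero_smul]
      have hz2 : (∑ j, c (Sum.inr (Sum.inl j)) • (ω * A2 j i)) = 0 :=
        Finset.sum_eq_zero fun j _ => by rw [(h12 j).2, zero_smul]
      rw [hz1, hz2, zero_add, zero_add] at h
      rcases zmod2_cases (c (Sum.inr (Sum.inr i))) with h1 | h1
      · exact h1
      · rw [h1, one_smul] at h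
        rcases hT2 i with h' | h' <;> rw [h] at h'
        · exact absurd h' one_ne_zero
        · exact absurd h'.symm hω1
    have hc0 : c = 0 := by
      funext r
      rcases r with j | j | j
      · exact (h12 j).1
      · exact (h12 j).2
      · exact h3 j
    rw [← hc, hc0]
    simp
  have hbot : C ⊓ (D ⊓ T) = ⊥ := by
    rw [eq_bot_iff]
    intro v hv
    rw [Submodule.mem_inf, Submodule.mem_inf] at hv
    rw [Submodule.mem_bot]
    exact hCT v hv.1 hv.2.2
  -- C ⊔ (D ⊓ T) = D
  have hsup : C ⊔ (D ⊓ T) = D := by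
    apply le_antisymm (sup_le hCD inf_le_left)
    intro v hv
    let a : Fin k0 → ZMod 2 := fun j => (bOm ω hω).repr (v (Sum.inl j)) 0
    let b : Fin k0 → ZMod 2 := fun j => (bOm ω hω).repr (v (Sum.inl j)) 1
    let c1 : (Fin k0 ⊕ Fin k0 ⊕ Fin k1) → ZMod 2 := Sum.elim a (Sum.elim b 0)
    let e1 : (Fin k0 ⊕ Fin k1 ⊕ Fin m) → F4 := ∑ r, c1 r • stdRow k0 k1 m ω A1 A2 A3 B1 B2 r
    have he1C : e1 ∈ C := by
      rw [hC]
      exact (Submodule.mem_span_range_iff_exists_fun _).mpr ⟨c1, rfl⟩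
    have hu0 : ∀ j : Fin k0, (v - e1) (Sum.inl j) = 0 := by
      intro j
      have he : e1 (Sum.inl j) = a j • (1:F4) + b j • ω :=
        rowSum_inl k0 k1 m ω A1 A2 A3 B1 B2 c1 j
      rw [Pi.sub_apply, he, sub_eq_zero]
      exact repr_decomp ω hω (v (Sum.inl j))
    let d : Fin k1 → ZMod 2 := fun i => (bOm ω hω).repr ((v - e1) (Sum.inr (Sum.inl i))) 0
    let c2 : (Fin k0 ⊕ Fin k0 ⊕ Fin k1) → ZMod 2 :=
      Sum.elim (fun _ => 0) (Sum.elim (fun _ => 0) d)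
    let e2 : (Fin k0 ⊕ Fin k1 ⊕ Fin m) → F4 := ∑ r, c2 r • stdRow k0 k1 m ω A1 A2 A3 B1 B2 r
    have he2C : e2 ∈ C := by
      rw [hC]
      exact (Submodule.mem_span_range_iff_exists_fun _).mpr ⟨c2, rfl⟩
    have he2l : ∀ j : Fin k0, e2 (Sum.inl j) = 0 := by
      intro j
      have he : e2 (Sum.inl j) = (0 : ZMod 2) • (1:F4) + (0 : ZMod 2) • ω :=
        rowSum_inl k0 k1 m ω A1 A2 A3 B1 B2 c2 j
      rw [he, zero_smul, zero_smul, add_zero]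
    have he2m : ∀ i : Fin k1, e2 (Sum.inr (Sum.inl i)) = d i • (1:F4) := by
      intro i
      have he := rowSum_inrinl k0 k1 m ω A1 A2 A3 B1 B2 c2 i
      have hz1 : (∑ j, c2 (Sum.inl j) • (ω * A1 j i)) = 0 :=
        Finset.sum_eq_zero fun j _ => by rw [show c2 (Sum.inl j) = 0 from rfl, zero_smul]
      have hz2 : (∑ j, c2 (Sum.inr (Sum.inl j)) • (ω * A2 j i)) = 0 :=
        Finset.sum_eq_zero fun j _ => by rw [show c2 (Sum.inr (Sum.inl j)) = 0 from rfl, zero_smul]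
      rw [hz1, hz2, zero_add, zero_add] at he
      exact he
    have hwT : (v - e1 - e2) ∈ T := by
      rw [memT]
      constructor
      · intro j
        rw [Pi.sub_apply, hu0 j, he2l j, sub_self]
      · intro i
        apply repr0_zero ω hω
        rw [Pi.sub_apply, he2m i, map_sub, Finsupp.sub_apply, map_smul, Finsupp.smul_apply,
          repr_one0 ω hω]
        rw [smul_eq_mul, mul_one]
        exact sub_self _
    have hwD : (v - e1 - e2) ∈ D := sub_mem (sub_mem hv (hCD he1C)) (hCD he2C)
    exact Submodule.mem_sup.mpr ⟨e1 + e2, add_mem he1C he2C, v - e1 - e2,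
      Submodule.mem_inf.mpr ⟨hwD, hwT⟩, by abel⟩
  refine ⟨D ⊓ T, hbot, ?_, ?_, ?_⟩
  · rw [hsup]
    exact hDset
  · -- cardinality
    have frF4 : Module.finrank (ZMod 2) F4 = 2 := GaloisField.finrank 2 (by norm_num)
    have frV : Module.finrank (ZMod 2) ((Fin k0 ⊕ Fin k1 ⊕ Fin m) → F4) = 2 * (k0 + k1 + m) := by
      rw [Module.finrank_pi_fintype (ZMod 2)]
      simp [frF4, Finset.sum_const, Fintype.card_sum]
      ring
    have frC : Module.finrank (ZMod 2) C = 2 * k0 + k1 := by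
      rw [hC, finrank_span_eq_card hli]
      simp [Fintype.card_sum]
      omega
    have frD : Module.finrank (ZMod 2) D = 2 * (k0 + k1 + m) - (2 * k0 + k1) := by
      rw [hD, LinearMap.BilinForm.finrank_orthogonal (BF_nondegenerate ω hω), frV, frC]
    have hle : Module.finrank (ZMod 2) C ≤ Module.finrank (ZMod 2) D :=
      Submodule.finrank_mono hCD
    have heq := Submodule.finrank_sup_add_finrank_inf_eq C (D ⊓ T)
    rw [hsup, hbot, finrank_bot] at heq
    have heq2 : Module.finrank (ZMod 2) ↥D + 0
        = Module.finrank (ZMod 2) ↥C + Module.finrank (ZMod 2) ↥(D ⊓ T) := heq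
    clear heq
    have frS : Module.finrank (ZMod 2) ↥(D ⊓ T) = 2 * (k0 + k1 + m) - 4 * k0 - 2 * k1 := by
      omega
    haveI : Fintype ↥(D ⊓ T) := Fintype.ofFinite _
    rw [Nat.card_eq_fintype_card, Module.card_eq_pow_finrank (K := ZMod 2) (V := ↥(D ⊓ T)),
      ZMod.card, frS]
  · intro v hv
    rw [Submodule.mem_inf] at hv
    exact (memT v).mp hv.2
end

section
/- (Hamming bound for mixed additive codes.) Let S ⊆ GF(4)^n be an additive code with |S| = 2^k, and suppose there is a set L of l coordinates and a fixed nonzero element α ∈ GF(4) such that every codeword of S has each of its entries on L equal to either 0 or α (so S is a mixed code of lengths l and n−l). Let d ≥ 1 be such that every nonzero codeword of S has Hamming weight at least d, and set e = ⌊(d−1)/2⌋. Then Σ_{i=0}^{e} Σ_{j=0}^{i} C(l, j) · 3^{i−j} · C(n−l, i−j) ≤ 2^{2n−l−k}. -/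
open Finset

noncomputable instance : Fintype F4 := Fintype.ofFinite _
noncomputable instance : DecidableEq F4 := Classical.decEq _

lemma F4_card : Fintype.card F4 = 4 := by
  have := GaloisField.card 2 2 (by norm_num)
  convert this using 2
  all_goals norm_num

lemma hWt_eq {ι : Type} [Fintype ι] {F : Type} [Zero F] [DecidableEq F] (v : ι → F) :
    hWt v = (univ.filter (fun i => v i ≠ 0)).card := by
  classical
  rw [hWt, Nat.card_eq_fintype_card, Fintype.card_subtype]

lemma hWt_add_le {ι : Type} [Fintype ι] {F : Type} [AddGroup F] [DecidableEq F] (a b : ι → F) :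
    hWt (a + b) ≤ hWt a + hWt b := by
  classical
  rw [hWt_eq, hWt_eq, hWt_eq]
  refine le_trans (Finset.card_le_card ?_) (Finset.card_union_le _ _)
  intro i hi
  simp only [mem_filter, mem_union, mem_univ, true_and, Pi.add_apply] at *
  by_contra h
  push_neg at h
  rw [h.1, h.2, add_zero] at hi
  exact hi rfl

lemma countB (n l E : ℕ) (L : Finset (Fin n)) (hL : L.card = l)
    (α : F4) (hα : α ≠ 0) :
    (univ.filter (fun v : Fin n → F4 => (∀ i ∈ L, v i = 0 ∨ v i = α) ∧ hWt v ≤ E)).card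
    = ∑ i ∈ Finset.range (E + 1), ∑ j ∈ Finset.range (i + 1),
      Nat.choose l j * 3 ^ (i - j) * Nat.choose (n - l) (i - j) := by
  classical
  set Bset : Finset (Fin n → F4) :=
    univ.filter (fun v => (∀ i ∈ L, v i = 0 ∨ v i = α) ∧ hWt v ≤ E) with hBset
  set K : Finset (Finset (Fin n) × Finset (Fin n)) :=
    (L.powerset ×ˢ Lᶜ.powerset).filter (fun pq => pq.1.card + pq.2.card ≤ E) with hK
  set φ : (Fin n → F4) → Finset (Fin n) × Finset (Fin n) :=
    fun v => ((univ.filter (fun i => v i ≠ 0)) ∩ L, (univ.filter (fun i => v i ≠ 0)) \ L)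
    with hφdef
  have hφ : ∀ v ∈ Bset, φ v ∈ K := by
    intro v hv
    rw [hBset, mem_filter] at hv
    obtain ⟨-, -, hwtv⟩ := hv
    rw [hK, mem_filter, Finset.mem_product, Finset.mem_powerset, Finset.mem_powerset]
    refine ⟨⟨Finset.inter_subset_right, ?_⟩, ?_⟩
    · intro i hi
      rw [Finset.mem_sdiff] at hi
      simpa using hi.2
    · rw [Finset.card_inter_add_card_sdiff]
      rw [hWt_eq] at hwtv
      exact hwtv
  rw [Finset.card_eq_sum_card_fiberwise hφ]
  have hfib : ∀ pq ∈ K, (Bset.filter (fun v => φ v = pq)).card = 3 ^ pq.2.card := by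
    rintro ⟨P, Q⟩ hpq
    rw [hK, mem_filter, Finset.mem_product, Finset.mem_powerset, Finset.mem_powerset] at hpq
    obtain ⟨⟨hP, hQ⟩, hsum⟩ := hpq
    have hdisj : Disjoint P Q := by
      rw [Finset.disjoint_left]
      intro i hiP hiQ
      exact (Finset.mem_compl.mp (hQ hiQ)) (hP hiP)
    have hQL : ∀ i ∈ Q, i ∉ L := fun i hi => Finset.mem_compl.mp (hQ hi)
    have hfeq : Bset.filter (fun v => φ v = (P, Q)) =
        Fintype.piFinset (fun i => if i ∈ P then ({α} : Finset F4)
          else if i ∈ Q then univ.erase 0 else ({0} : Finset F4)) := by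
      ext v
      rw [mem_filter, hBset, mem_filter, Fintype.mem_piFinset]
      simp only [mem_univ, true_and, hφdef, Prod.mk.injEq]
      constructor
      · rintro ⟨⟨hmixv, hwtv⟩, h1, h2⟩
        intro i
        by_cases hiP : i ∈ P
        · rw [if_pos hiP]
          have : i ∈ univ.filter (fun i => v i ≠ 0) ∩ L := h1 ▸ hiP
          rw [Finset.mem_inter, mem_filter] at this
          rcases hmixv i this.2 with h | h
          · exact absurd h this.1.2
          · simp [h]
        · rw [if_neg hiP]
          by_cases hiQ : i ∈ Q
          · rw [if_pos hiQ]
            have : i ∈ univ.filter (fun i => v i ≠ 0) \ L := h2 ▸ hiQ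
            rw [Finset.mem_sdiff, mem_filter] at this
            simp [this.1.2]
          · rw [if_neg hiQ]
            rw [Finset.mem_singleton]
            by_contra hv0
            have hisupp : i ∈ univ.filter (fun i => v i ≠ 0) := by
              simp [hv0]
            by_cases hiL : i ∈ L
            · exact hiP (h1 ▸ Finset.mem_inter.mpr ⟨hisupp, hiL⟩)
            · exact hiQ (h2 ▸ Finset.mem_sdiff.mpr ⟨hisupp, hiL⟩)
      · intro h
        have hsupp : univ.filter (fun i => v i ≠ 0) = P ∪ Q := by
          ext i
          simp only [mem_filter, mem_univ, true_and, Finset.mem_union]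
          specialize h i
          split_ifs at h with h1 h2
          · rw [Finset.mem_singleton] at h
            simp [h, hα, h1]
          · rw [Finset.mem_erase] at h
            simp [h.1, h2]
          · rw [Finset.mem_singleton] at h
            simp [h, h1, h2]
        have hmixv : ∀ i ∈ L, v i = 0 ∨ v i = α := by
          intro i hiL
          specialize h i
          by_cases hiP : i ∈ P
          · rw [if_pos hiP, Finset.mem_singleton] at h
            exact Or.inr h
          · have hiQ : i ∉ Q := fun hq => hQL i hq hiL
            rw [if_neg hiP, if_neg hiQ, Finset.mem_singleton] at h
            exact Or.inl h
        have hwtv : hWt v ≤ E := by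
          rw [hWt_eq, hsupp, Finset.card_union_of_disjoint hdisj]
          exact hsum
        refine ⟨⟨hmixv, hwtv⟩, ?_, ?_⟩
        · rw [hsupp]
          ext i
          simp only [Finset.mem_inter, Finset.mem_union]
          constructor
          · rintro ⟨hPQ | hPQ, hiL⟩
            · exact hPQ
            · exact absurd hiL (hQL i hPQ)
          · intro hiP
            exact ⟨Or.inl hiP, hP hiP⟩
        · rw [hsupp]
          ext i
          simp only [Finset.mem_sdiff, Finset.mem_union]
          constructor
          · rintro ⟨hPQ | hPQ, hiL⟩
            · exact absurd (hP hPQ) hiL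
            · exact hPQ
          · intro hiQ
            exact ⟨Or.inr hiQ, hQL i hiQ⟩
    rw [hfeq, Fintype.card_piFinset]
    have hc : ∀ i, (if i ∈ P then ({α} : Finset F4)
        else if i ∈ Q then univ.erase 0 else ({0} : Finset F4)).card
        = if i ∈ Q then 3 else 1 := by
      intro i
      by_cases hiP : i ∈ P
      · have hiQ : i ∉ Q := Finset.disjoint_left.mp hdisj hiP
        simp [hiP, hiQ]
      · by_cases hiQ : i ∈ Q
        · simp [hiP, hiQ, Finset.card_erase_of_mem, F4_card]
        · simp [hiP, hiQ]
    simp_rw [hc]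
    rw [← Finset.prod_filter_mul_prod_filter_not univ (· ∈ Q)]
    rw [Finset.prod_congr rfl (fun x hx => if_pos (Finset.mem_filter.mp hx).2),
        Finset.prod_congr rfl (fun x hx => if_neg (Finset.mem_filter.mp hx).2),
        Finset.prod_const, Finset.prod_const, one_pow, mul_one]
    congr 1
    rw [Finset.filter_mem_eq_inter, Finset.univ_inter]
  rw [Finset.sum_congr rfl hfib]
  -- step 3
  set T : Finset ((_ : ℕ) × ℕ) := (Finset.range (E + 1)).sigma (fun i => Finset.range (i + 1))
    with hT
  have hmaps : ∀ pq ∈ K, (⟨pq.1.card + pq.2.card, pq.1.card⟩ : (_ : ℕ) × ℕ) ∈ T := by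
    rintro ⟨P, Q⟩ hpq
    rw [hK, mem_filter] at hpq
    dsimp only at hpq
    rw [hT, Finset.mem_sigma]
    dsimp only
    rw [Finset.mem_range, Finset.mem_range]
    omega
  rw [← Finset.sum_fiberwise_of_maps_to hmaps (fun pq => 3 ^ pq.2.card)]
  rw [hT, Finset.sum_sigma]
  refine Finset.sum_congr rfl (fun i hi => Finset.sum_congr rfl (fun j hj => ?_))
  rw [Finset.mem_range] at hi hj
  have hij : j ≤ i := by omega
  have hiE : i ≤ E := by omega
  have hKf : K.filter (fun pq => (⟨pq.1.card + pq.2.card, pq.1.card⟩ : (_ : ℕ) × ℕ) = ⟨i, j⟩)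
      = L.powersetCard j ×ˢ Lᶜ.powersetCard (i - j) := by
    ext ⟨P, Q⟩
    rw [mem_filter, hK, mem_filter, Finset.mem_product, Finset.mem_powerset,
        Finset.mem_powerset, Finset.mem_product, Finset.mem_powersetCard,
        Finset.mem_powersetCard]
    simp only [Sigma.mk.inj_iff, heq_eq_eq]
    constructor
    · rintro ⟨⟨⟨hP, hQ⟩, hsum⟩, h1, h2⟩
      exact ⟨⟨hP, h2⟩, hQ, by omega⟩
    · rintro ⟨⟨hP, hPc⟩, hQ, hQc⟩
      refine ⟨⟨⟨hP, hQ⟩, by omega⟩, by omega, hPc⟩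
  rw [hKf]
  have hconst : ∀ pq ∈ L.powersetCard j ×ˢ Lᶜ.powersetCard (i - j),
      (3 : ℕ) ^ pq.2.card = 3 ^ (i - j) := by
    rintro ⟨P, Q⟩ hpq
    simp only [Finset.mem_product, Finset.mem_powersetCard] at hpq
    rw [hpq.2.2]
  rw [Finset.sum_congr rfl hconst, Finset.sum_const, Finset.card_product,
      Finset.card_powersetCard, Finset.card_powersetCard, Finset.card_compl, hL]
  simp only [Fintype.card_fin, smul_eq_mul]
  ring

/-- Hamming bound for mixed additive codes: if `S ⊆ GF(4)^n` is additive with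
`|S| = 2^k`, takes values in `{0, α}` (for a fixed `α ≠ 0`) on a set `L` of `l`
coordinates, and all its nonzero codewords have weight at least `d`, then with
`e = ⌊(d−1)/2⌋`, `∑_{i=0}^{e} ∑_{j=0}^{i} C(l,j) 3^{i−j} C(n−l, i−j) ≤ 2^{2n−l−k}`. -/
theorem stmt12 (n k l d : ℕ) (hd : 1 ≤ d)
    (S : Submodule (ZMod 2) (Fin n → F4)) (hcard : Nat.card S = 2 ^ k)
    (L : Finset (Fin n)) (hL : L.card = l)
    (α : F4) (hα : α ≠ 0)
    (hmix : ∀ v ∈ S, ∀ i ∈ L, v i = 0 ∨ v i = α)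
    (hwt : ∀ v ∈ S, v ≠ 0 → d ≤ hWt v) :
    ∑ i ∈ Finset.range ((d - 1) / 2 + 1), ∑ j ∈ Finset.range (i + 1),
      Nat.choose l j * 3 ^ (i - j) * Nat.choose (n - l) (i - j)
        ≤ 2 ^ (2 * n - l - k) := by
  classical
  set E := (d - 1) / 2 with hE
  set Bset : Finset (Fin n → F4) :=
    univ.filter (fun v => (∀ i ∈ L, v i = 0 ∨ v i = α) ∧ hWt v ≤ E) with hBset
  set Aset : Finset (Fin n → F4) :=
    Fintype.piFinset (fun i => if i ∈ L then ({0, α} : Finset F4) else univ) with hAset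
  set Sset : Finset (Fin n → F4) := univ.filter (fun v => v ∈ S) with hSset
  have hln : l ≤ n := by
    rw [← hL]
    simpa using L.card_le_univ
  have hScard : Sset.card = 2 ^ k := by
    rw [← hcard, Nat.card_eq_fintype_card, Fintype.card_subtype]
  have hAcard : Aset.card = 2 ^ (2 * n - l) := by
    rw [hAset, Fintype.card_piFinset]
    have : ∀ i, (if i ∈ L then ({0, α} : Finset F4) else univ).card
        = if i ∈ L then 2 else 4 := by
      intro i
      by_cases h : i ∈ L <;> simp [h, Finset.card_insert_of_notMem, hα.symm, ← F4_card]
    simp_rw [this]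
    rw [← Finset.prod_filter_mul_prod_filter_not univ (· ∈ L)]
    rw [Finset.prod_congr rfl (fun x hx => if_pos (Finset.mem_filter.mp hx).2),
        Finset.prod_congr rfl (fun x hx => if_neg (Finset.mem_filter.mp hx).2),
        Finset.prod_const, Finset.prod_const]
    have h1 : (univ.filter (· ∈ L)).card = l := by
      rw [Finset.filter_mem_eq_inter]; simpa using hL
    have h2 : (univ.filter (· ∉ L)).card = n - l := by
      rw [Finset.filter_not, Finset.filter_mem_eq_inter]
      simp [Finset.card_sdiff_of_subset, hL]
    rw [h1, h2]
    have : (4 : ℕ) = 2 ^ 2 := by norm_num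
    rw [this, ← pow_mul, ← pow_add]
    congr 1
    omega
  -- counting lemma
  have hBcard : Bset.card = ∑ i ∈ Finset.range (E + 1), ∑ j ∈ Finset.range (i + 1),
      Nat.choose l j * 3 ^ (i - j) * Nat.choose (n - l) (i - j) := by
    exact countB n l E L hL α hα
  -- packing lemma
  have hpack : Sset.card * Bset.card ≤ Aset.card := by
    rw [← Finset.card_product]
    apply Finset.card_le_card_of_injOn (fun p => p.1 + p.2)
    · rintro ⟨s, b⟩ hp
      rw [Finset.mem_coe, Finset.mem_product, hSset, hBset, mem_filter, mem_filter] at hp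
      obtain ⟨⟨-, hs⟩, -, hb, -⟩ := hp
      dsimp only at hs hb
      rw [Finset.mem_coe, hAset, Fintype.mem_piFinset]
      intro i
      by_cases h : i ∈ L
      · simp only [if_pos h, Finset.mem_insert, Finset.mem_singleton, Pi.add_apply]
        rcases hmix s hs i h with h1 | h1 <;> rcases hb i h with h2 | h2 <;>
          rw [h1, h2] <;> simp [CharTwo.add_self_eq_zero]
      · simp [if_neg h]
    · rintro ⟨s, b⟩ hp ⟨s', b'⟩ hq heq
      simp only [Finset.mem_coe, Finset.mem_product, hSset, hBset, mem_filter, mem_univ,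
        true_and] at hp hq
      obtain ⟨hs, -, hwb⟩ := hp
      obtain ⟨hs', -, hwb'⟩ := hq
      simp only at heq
      have hkey : s - s' = b' - b := by
        rw [sub_eq_sub_iff_add_eq_add, heq, add_comm]
      have hnegb : -b = b := funext fun i => CharTwo.neg_eq (b i)
      have hss' : s = s' := by
        by_contra hne
        have hmem : s - s' ∈ S := S.sub_mem hs hs'
        have hne0 : s - s' ≠ 0 := sub_ne_zero_of_ne hne
        have h1 : d ≤ hWt (s - s') := hwt _ hmem hne0
        have h2 : hWt (s - s') ≤ E + E := by
          rw [hkey, sub_eq_add_neg, hnegb]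
          exact le_trans (hWt_add_le b' b) (Nat.add_le_add hwb' hwb)
        omega
      subst hss'
      have : b = b' := by
        have := heq
        exact add_left_cancel this
      rw [this]
  -- S ⊆ A
  have hSA : Sset ⊆ Aset := by
    intro v hv
    rw [hSset, mem_filter] at hv
    rw [hAset, Fintype.mem_piFinset]
    intro i
    by_cases h : i ∈ L
    · simp only [if_pos h, Finset.mem_insert, Finset.mem_singleton]
      exact hmix v hv.2 i h
    · simp [if_neg h]
  have hkle : k ≤ 2 * n - l := by
    have h1 : 2 ^ k ≤ 2 ^ (2 * n - l) := by
      rw [← hScard, ← hAcard]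
      exact Finset.card_le_card hSA
    exact (Nat.pow_le_pow_iff_right (by norm_num)).mp h1
  rw [← hBcard]
  have hfin := hpack
  rw [hScard, hAcard] at hfin
  have h2 : 2 ^ (2 * n - l) = 2 ^ k * 2 ^ (2 * n - l - k) := by
    rw [← pow_add]
    congr 1
    omega
  rw [h2] at hfin
  exact Nat.le_of_mul_le_mul_left hfin (by positivity)
end
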